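/- arXiv:1408.3671 — 10 statements merged into one kernel-verified Lean document; each statement's English description precedes it below -/
import Mathlib

section
/- For all positive integers s and k, every finite family F of finite sets, each of cardinality at most s, with |F| ≥ (√10 − 2)² · (k/(√10 − 2))^s · s! contains a sunflower of cardinality k. -/
/-- A family `B` is a sunflower with some core `Y`: any two distinct members
intersect exactly in `Y`. -/
def IsSunflower {α : Type*} [DecidableEq α] (B : Finset (Finset α)) : Prop :=
  ∃ Y : Finset α, ∀ U ∈ B, ∀ V ∈ B, U ≠ V → U ∩ V = Y

/-!
Write `f(s) = (√10 - 2)² (k / (√10 - 2))^s s!` and induct on `s`. If `F` has no `k`-sunflower,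
neither has the link of a point or of a pair, so every point lies in at most `f(s-1)` members and
every pair in at most `f(s-2)`. Let `D` be a maximal pairwise disjoint subfamily, with `t < k`
members and union `A`; every nonempty member meets `A`. The degree sum over `A` counts members
meeting `A` twice or more at least twice. Members meeting `A` in one point `x` number more than
`θ = 2(k-t)(s-1)f(s-2)` for fewer than `k` points `x`: otherwise at most `2(k-t)` such points,
touching few members of `D`, carry pairwise disjoint members (a greedy choice, by the codegree
bound), and these together with the untouched members of `D` are `k` pairwise disjoint sets.
Hence `2|F| ≤ 2 + (k-1)f(s-1) + ts(f(s-1) + θ)`, which is below `2f(s)` since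
`(√10 - 2) f(s) = ks f(s-1)`, after an AM-GM estimate in `t`.
-/

namespace Sunflower

open Finset

noncomputable def ρ : ℝ := Real.sqrt 10 - 2

lemma ρ_sq : ρ ^ 2 = 6 - 4 * ρ := by
  have := Real.sq_sqrt (show (0 : ℝ) ≤ 10 by norm_num)
  unfold ρ; linear_combination this

lemma ρ_bounds : 9 / 8 < ρ ∧ ρ < 2 := by
  have h := Real.sq_sqrt (show (0 : ℝ) ≤ 10 by norm_num)
  have h0 := Real.sqrt_nonneg 10
  unfold ρ; constructor <;> nlinarith

lemma ρ_pos : 0 < ρ := by linarith [ρ_bounds.1]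

noncomputable def sunflowerBound (k s : ℕ) : ℝ := ρ ^ 2 * ((k : ℝ) / ρ) ^ s * (s.factorial : ℝ)

lemma sunflowerBound_pos {k : ℕ} (hk : 0 < k) (s : ℕ) : 0 < sunflowerBound k s := by
  have := ρ_pos
  unfold sunflowerBound; positivity

lemma ρ_mul_sunflowerBound_succ (k s : ℕ) :
    ρ * sunflowerBound k (s + 1) = k * (s + 1) * sunflowerBound k s := by
  have := ρ_pos.ne'
  unfold sunflowerBound
  rw [Nat.factorial_succ, pow_succ _ s]; push_cast
  field_simp

lemma ρ_mul_le_sunflowerBound_succ {k : ℕ} (hk : 2 ≤ k) (s : ℕ) :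
    ρ * k ≤ sunflowerBound k (s + 1) := by
  have hkρ : 1 ≤ (k : ℝ) / ρ := by
    rw [le_div_iff₀ ρ_pos]; have : (2 : ℝ) ≤ k := by exact_mod_cast hk
    linarith [ρ_bounds.2]
  have hfac : (1 : ℝ) ≤ (s + 1).factorial := by exact_mod_cast (s + 1).factorial_pos
  have := ρ_pos
  calc ρ * k = ρ ^ 2 * 1 * ((k : ℝ) / ρ) * 1 := by field_simp
    _ ≤ ρ ^ 2 * ((k : ℝ) / ρ) ^ s * ((k : ℝ) / ρ) * (s + 1).factorial := by
      gcongr; exact one_le_pow₀ hkρ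
    _ = sunflowerBound k (s + 1) := by rw [sunflowerBound, pow_succ]; ring

/-- The arithmetic of the induction step: `t` is the size of a maximal disjoint subfamily,
`Φ` the degree bound and `θ` the threshold on members meeting its union in a single point. -/
lemma ρ_mul_lt_of_two_mul_le {k t s Φ θ N : ℝ} (hk : 2 ≤ k) (hs : 2 ≤ s)
    (hΦ : ρ * k ≤ Φ) (hθ : k * θ = 2 * (k - t) * ρ * Φ)
    (hN : 2 * N ≤ 2 + (k - 1) * Φ + t * s * (Φ + θ)) : ρ * N < k * s * Φ := by
  obtain ⟨hρ₁, hρ₂⟩ := ρ_bounds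
  -- the worst case is `t = k (1 + 2ρ) / (4ρ)`, and `(1 + 2ρ)² = 25 - 12ρ`
  have hamgm : 8 * ρ * t * (k + 2 * ρ * (k - t)) ≤ k ^ 2 * (25 - 12 * ρ) := by
    nlinarith [sq_nonneg (k * (1 + 2 * ρ) - 4 * ρ * t), ρ_sq]
  have hΦ2 : 2 < Φ := by nlinarith
  have h1 : 2 * ρ * k * N ≤
      2 * ρ * k + ρ * k * (k - 1) * Φ + s * Φ * (ρ * t * (k + 2 * ρ * (k - t))) := by
    have h := mul_le_mul_of_nonneg_left hN (by positivity : 0 ≤ ρ * k)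
    have e : ρ * k * (t * s * θ) = ρ * t * s * (2 * (k - t) * ρ * Φ) := by rw [← hθ]; ring
    linarith
  have h2 := mul_le_mul_of_nonneg_left hamgm (by positivity : 0 ≤ s * Φ)
  have h3 : 16 * ρ + 8 * ρ * (k - 1) * Φ < k * s * Φ * (12 * ρ - 9) := by
    have : 8 * ρ ≤ s * (12 * ρ - 9) := by nlinarith
    have := mul_le_mul_of_nonneg_left this (by positivity : 0 ≤ k * Φ)
    nlinarith [mul_pos ρ_pos (sub_pos.mpr hΦ2)]
  have h4 := mul_lt_mul_of_pos_left h3 (by positivity : 0 < k)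
  have h5 : 16 * k * (ρ * N) < 16 * k * (k * s * Φ) := by linarith
  exact lt_of_mul_lt_mul_left h5 (by positivity)

variable {α : Type*}

lemma pairwiseDisjoint_of_card_le_one {F : Finset (Finset α)} (hF : ∀ U ∈ F, #U ≤ 1) :
    (F : Set (Finset α)).PairwiseDisjoint id := fun U hU V hV hUV ↦ by
  refine disjoint_left.mpr fun a haU haV ↦ hUV ?_
  have hsingleton : ∀ W ∈ F, a ∈ W → W = {a} := fun W hW ha ↦
    eq_singleton_iff_unique_mem.mpr ⟨ha, fun b hb ↦ card_le_one.mp (hF W hW) b hb a ha⟩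
  exact (hsingleton U hU haU).trans (hsingleton V hV haV).symm

lemma sum_le_card_filter_lt_mul_add (A : Finset α) {f : α → ℝ} {Φ θ : ℝ}
    (hf : ∀ x ∈ A, f x ≤ Φ) (hθ : 0 ≤ θ) :
    ∑ x ∈ A, f x ≤ #{x ∈ A | θ < f x} * Φ + #A * θ := by
  rw [← sum_filter_add_sum_filter_not A (θ < f ·)]
  refine add_le_add ?_ ?_
  · simpa using sum_le_card_nsmul _ _ Φ fun x hx ↦ hf x (mem_filter.mp hx).1
  · refine (sum_le_card_nsmul _ _ θ fun x hx ↦ le_of_not_gt (mem_filter.mp hx).2).trans ?_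
    rw [nsmul_eq_mul]
    gcongr
    exact filter_subset _ _

variable [DecidableEq α]

lemma mem_inter_of_inter_eq_singleton {U A : Finset α} {x : α} (h : U ∩ A = {x}) :
    x ∈ U ∩ A :=
  h ▸ mem_singleton_self x

def SunflowerFree (k : ℕ) (F : Finset (Finset α)) : Prop :=
  ¬ ∃ B ⊆ F, #B = k ∧ IsSunflower B

lemma isSunflower_of_pairwiseDisjoint {B : Finset (Finset α)}
    (hB : (B : Set (Finset α)).PairwiseDisjoint id) : IsSunflower B :=
  ⟨∅, fun _ hU _ hV hUV ↦ disjoint_iff_inter_eq_empty.mp (hB hU hV hUV)⟩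

lemma SunflowerFree.card_lt_of_pairwiseDisjoint {k : ℕ} {F B : Finset (Finset α)}
    (hF : SunflowerFree k F) (hBF : B ⊆ F) (hB : (B : Set (Finset α)).PairwiseDisjoint id) :
    #B < k := by
  by_contra! h
  obtain ⟨B', hB'B, hB'⟩ := exists_subset_card_eq h
  exact hF ⟨B', hB'B.trans hBF, hB', isSunflower_of_pairwiseDisjoint (hB.subset hB'B)⟩

lemma SunflowerFree.eq_empty_of_one {F : Finset (Finset α)} (hF : SunflowerFree 1 F) : F = ∅ := by
  refine eq_empty_iff_forall_notMem.mpr fun U hU ↦ ?_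
  have := hF.card_lt_of_pairwiseDisjoint (singleton_subset_iff.mpr hU) (by simp)
  simp at this

def link (F : Finset (Finset α)) (S : Finset α) : Finset (Finset α) :=
  {U ∈ F | S ⊆ U}.image (· \ S)

lemma card_link (F : Finset (Finset α)) (S : Finset α) : #(link F S) = #{U ∈ F | S ⊆ U} := by
  refine card_image_of_injOn fun U hU V hV (h : U \ S = V \ S) ↦ ?_
  rw [← sdiff_union_of_subset (mem_filter.mp hU).2, ← sdiff_union_of_subset (mem_filter.mp hV).2, h]

lemma card_add_card_le_of_mem_link {F : Finset (Finset α)} {S : Finset α} {s : ℕ}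
    (hF : ∀ U ∈ F, #U ≤ s) {V : Finset α} (hV : V ∈ link F S) : #V + #S ≤ s := by
  obtain ⟨U, hU, rfl⟩ := mem_image.mp hV
  rw [card_sdiff_add_card_eq_card (mem_filter.mp hU).2]
  exact hF U (mem_filter.mp hU).1

/-- Adjoining `S` back to the members of a sunflower in the link gives a sunflower in `F`,
with `S` added to its core. -/
lemma SunflowerFree.link {k : ℕ} {F : Finset (Finset α)} (hF : SunflowerFree k F)
    (S : Finset α) : SunflowerFree k (link F S) := by
  rintro ⟨B, hB, rfl, Y, hY⟩
  have hmem : ∀ V ∈ B, Disjoint V S ∧ V ∪ S ∈ F := fun V hV ↦ by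
    obtain ⟨U, hU, rfl⟩ := mem_image.mp (hB hV)
    obtain ⟨hUF, hSU⟩ := mem_filter.mp hU
    exact ⟨sdiff_disjoint, by rwa [sdiff_union_of_subset hSU]⟩
  refine hF ⟨B.image (· ∪ S), fun U hU ↦ ?_, card_image_of_injOn fun V hV W hW h ↦ ?_, Y ∪ S, ?_⟩
  · obtain ⟨V, hV, rfl⟩ := mem_image.mp hU
    exact (hmem V hV).2
  · rw [← union_sdiff_cancel_right (hmem V hV).1, ← union_sdiff_cancel_right (hmem W hW).1]
    exact congrArg (· \ S) h
  · simp only [mem_image]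
    rintro _ ⟨V, hV, rfl⟩ _ ⟨W, hW, rfl⟩ hVW
    rw [← inter_union_distrib_right, hY V hV W hW (by rintro rfl; exact hVW rfl)]

lemma exists_pairwiseDisjoint_maximal (F : Finset (Finset α)) :
    ∃ D ⊆ F, (D : Set (Finset α)).PairwiseDisjoint id ∧
      ∀ U ∈ F, Disjoint U (D.sup id) → U = ∅ := by
  classical
  set P := F.powerset.filter fun D : Finset (Finset α) ↦ (D : Set (Finset α)).PairwiseDisjoint id
  obtain ⟨D, hD⟩ := P.exists_maximal ⟨∅, by simp [P]⟩
  obtain ⟨hDF, hDdisj⟩ := mem_filter.mp hD.prop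
  refine ⟨D, mem_powerset.mp hDF, hDdisj, fun U hU hUD ↦ ?_⟩
  by_cases hUD' : U ∈ D
  · exact disjoint_self.mp (hUD.mono_right (le_sup (f := id) hUD'))
  · have hins : insert U D ∈ P := by
      refine mem_filter.mpr ⟨mem_powerset.mpr (insert_subset hU (mem_powerset.mp hDF)), ?_⟩
      rw [coe_insert]
      exact hDdisj.insert fun W hW _ ↦ hUD.mono_right (le_sup (f := id) hW)
    exact absurd (hD.2 hins (subset_insert U D) (mem_insert_self U D)) hUD'

/-- Every set meets `A` in no point, in exactly one point, or contributes at least two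
incidences to the degree sum over `A`. -/
lemma two_mul_card_le (F : Finset (Finset α)) (A : Finset α) :
    2 * #F ≤ 2 * #{U ∈ F | Disjoint U A} + ∑ x ∈ A, #{U ∈ F | U ∩ A = {x}} +
      ∑ x ∈ A, #{U ∈ F | x ∈ U} := by
  have key : ∀ U : Finset α, 2 ≤ 2 * (if Disjoint U A then 1 else 0) +
      ∑ x ∈ A, (if U ∩ A = {x} then 1 else 0) + ∑ x ∈ A, (if x ∈ U then 1 else 0) := by
    intro U
    have hdeg : ∑ x ∈ A, (if x ∈ U then 1 else 0) = #(U ∩ A) := by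
      rw [← card_filter, filter_mem_eq_inter, inter_comm]
    rw [hdeg]
    rcases Nat.lt_or_ge #(U ∩ A) 2 with h | h
    · interval_cases hUA : #(U ∩ A)
      · simp [disjoint_iff_inter_eq_empty, card_eq_zero.mp hUA]
      · obtain ⟨y, hy⟩ := card_eq_one.mp hUA
        have hyA : y ∈ A := (mem_inter.mp (mem_inter_of_inter_eq_singleton hy)).2
        have := single_le_sum (f := fun x ↦ if U ∩ A = {x} then 1 else 0)
          (fun _ _ ↦ Nat.zero_le _) hyA
        rw [if_pos hy] at this
        omega
    · omega
  simp only [card_filter, mul_sum]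
  rw [sum_comm (s := A), sum_comm (s := A), ← sum_add_distrib, ← sum_add_distrib,
    card_eq_sum_ones, mul_sum]
  exact sum_le_sum fun U _ ↦ by simpa [mul_sum] using key U

lemma exists_one_lt_card_inter {D : Finset (Finset α)} {G : Finset α} (hG : G ⊆ D.sup id)
    (hDG : #D < #G) : ∃ W ∈ D, 1 < #(G ∩ W) := by
  by_contra! h
  have hcover : G ⊆ D.biUnion (G ∩ ·) := fun x hx ↦ by
    obtain ⟨W, hW, hxW⟩ := mem_sup.mp (hG hx)
    exact mem_biUnion.mpr ⟨W, hW, mem_inter.mpr ⟨hx, hxW⟩⟩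
  have := (card_le_card hcover).trans (card_biUnion_le_card_mul D _ 1 h)
  omega

lemma card_not_disjoint_union_le {D : Finset (Finset α)}
    (hD : (D : Set (Finset α)).PairwiseDisjoint id) {W Y : Finset α} (hW : W ∈ D) (hY : Y ⊆ W)
    (X : Finset α) :
    #{W' ∈ D | ¬Disjoint W' (X ∪ Y)} ≤ #{W' ∈ D.erase W | ¬Disjoint W' X} + 1 := by
  refine (card_le_card fun W' hW' ↦ ?_).trans (card_insert_le W _)
  obtain ⟨hW'D, h⟩ := mem_filter.mp hW'
  by_cases hW'W : W' = W
  · exact mem_insert.mpr (Or.inl hW'W)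
  · refine mem_insert.mpr (Or.inr (mem_filter.mpr ⟨mem_erase.mpr ⟨hW'W, hW'D⟩, fun hX ↦ h ?_⟩))
    exact disjoint_union_right.mpr ⟨hX, (hD hW'D hW hW'W).mono_right hY⟩

/-- Take the whole trace `G ∩ W` of members `W` meeting `G` at least twice, truncating the last
one: each adds `#(G ∩ W) - 1 ≥ #(G ∩ W) / 2` to the excess. -/
lemma exists_subset_card_le_two_mul {D : Finset (Finset α)}
    (hD : (D : Set (Finset α)).PairwiseDisjoint id) {G : Finset α} (hG : G ⊆ D.sup id)
    {r : ℕ} (hr : #D + r ≤ #G) :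
    ∃ X ⊆ G, #X ≤ 2 * r ∧ r + #{W ∈ D | ¬Disjoint W X} ≤ #X := by
  induction D using Finset.strongInduction generalizing G r with
  | H D ih =>
  rcases r.eq_zero_or_pos with rfl | hr0
  · exact ⟨∅, empty_subset G, by simp, by simp⟩
  obtain ⟨W, hWD, hW⟩ := exists_one_lt_card_inter hG (by omega)
  by_cases hbig : r < #(G ∩ W)
  · obtain ⟨X, hXW, hX⟩ := exists_subset_card_eq (hbig : r + 1 ≤ #(G ∩ W))
    refine ⟨X, hXW.trans inter_subset_left, by omega, ?_⟩
    have := card_not_disjoint_union_le hD hWD (hXW.trans inter_subset_right) ∅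
    simp only [empty_union, disjoint_empty_right, not_true_eq_false, filter_false,
      card_empty] at this
    omega
  · obtain ⟨X, hXG, hX, hXtouch⟩ := ih (D.erase W) (erase_ssubset hWD)
      (hD.subset (coe_subset.mpr (erase_subset W D))) (G := G \ W) (r := r + 1 - #(G ∩ W))
      (fun x hx ↦ by
        obtain ⟨hxG, hxW⟩ := mem_sdiff.mp hx
        obtain ⟨V, hV, hxV⟩ := mem_sup.mp (hG hxG)
        exact mem_sup.mpr ⟨V, mem_erase.mpr ⟨by rintro rfl; exact hxW hxV, hV⟩, hxV⟩)
      (by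
        have := card_le_card (inter_subset_left (s₁ := G) (s₂ := W))
        have := card_pos.mpr ⟨W, hWD⟩
        rw [card_erase_of_mem hWD, card_sdiff, inter_comm W G]
        omega)
    have hdisj : Disjoint X (G ∩ W) :=
      disjoint_left.mpr fun x hx hx' ↦ (mem_sdiff.mp (hXG hx)).2 (mem_inter.mp hx').2
    refine ⟨X ∪ G ∩ W, union_subset (hXG.trans sdiff_subset) inter_subset_left, ?_, ?_⟩
    · rw [card_union_of_disjoint hdisj]; omega
    · have := card_not_disjoint_union_le hD hWD (Y := G ∩ W) inter_subset_right X
      rw [card_union_of_disjoint hdisj]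
      omega

lemma exists_disjoint_of_card_mul_lt {C : Finset (Finset α)} {Z : Finset α} {τ : ℝ}
    (hτ : ∀ z ∈ Z, (#{U ∈ C | z ∈ U} : ℝ) ≤ τ) (hZ : #Z * τ < #C) :
    ∃ U ∈ C, Disjoint U Z := by
  by_contra! h
  have hcover : C ⊆ Z.biUnion fun z ↦ {U ∈ C | z ∈ U} := fun U hU ↦ by
    obtain ⟨z, hzU, hzZ⟩ := not_disjoint_iff.mp (h U hU)
    exact mem_biUnion.mpr ⟨z, hzZ, mem_filter.mpr ⟨hU, hzU⟩⟩
  have : (#C : ℝ) ≤ #Z * τ := calc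
    (#C : ℝ) ≤ ∑ z ∈ Z, (#{U ∈ C | z ∈ U} : ℝ) := by
      exact_mod_cast (card_le_card hcover).trans card_biUnion_le
    _ ≤ #Z * τ := by simpa using sum_le_card_nsmul _ _ _ hτ
  linarith

/-- A greedy choice: the sets chosen so far have at most `#X * m` points outside `A`, and inside
`A` each of them is just its own point. -/
lemma exists_pairwiseDisjoint_transversal {A X : Finset α} {C : α → Finset (Finset α)} {m : ℕ}
    (hC : ∀ x ∈ X, ∀ U ∈ C x, U ∩ A = {x} ∧ #(U \ A) ≤ m)
    (havoid : ∀ x ∈ X, ∀ Z : Finset α, Disjoint Z A → #Z ≤ #X * m → ∃ U ∈ C x, Disjoint U Z) :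
    ∃ φ : α → Finset α, (∀ x ∈ X, φ x ∈ C x) ∧ (X : Set α).PairwiseDisjoint φ := by
  induction X using Finset.induction_on with
  | empty => exact ⟨fun _ ↦ ∅, by simp, by simp⟩
  | insert x X hx ih =>
  obtain ⟨φ, hφC, hφ⟩ := ih (fun y hy ↦ hC y (mem_insert_of_mem hy)) fun y hy Z hZA hZ ↦
    havoid y (mem_insert_of_mem hy) Z hZA
      (hZ.trans (Nat.mul_le_mul_right m (card_le_card (subset_insert x X))))
  set Z := X.biUnion fun y ↦ φ y \ A
  have hZ : #Z ≤ #X * m :=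
    card_biUnion_le_card_mul X _ m fun y hy ↦ (hC y (mem_insert_of_mem hy) _ (hφC y hy)).2
  obtain ⟨U, hUC, hUZ⟩ := havoid x (mem_insert_self x X) Z
    ((disjoint_biUnion_left _ _ _).mpr fun _ _ ↦ sdiff_disjoint)
    (hZ.trans (Nat.mul_le_mul_right m (card_le_card (subset_insert x X))))
  have hUφ : ∀ y ∈ X, Disjoint U (φ y) := fun y hy ↦ disjoint_left.mpr fun a haU haφ ↦ by
    by_cases haA : a ∈ A
    · have hax := (hC x (mem_insert_self x X) U hUC).1 ▸ mem_inter.mpr ⟨haU, haA⟩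
      have hay := (hC y (mem_insert_of_mem hy) _ (hφC y hy)).1 ▸ mem_inter.mpr ⟨haφ, haA⟩
      rw [mem_singleton] at hax hay
      exact hx (hax ▸ hay ▸ hy)
    · exact disjoint_left.mp hUZ haU (mem_biUnion.mpr ⟨y, hy, mem_sdiff.mpr ⟨haφ, haA⟩⟩)
  refine ⟨Function.update φ x U, fun y hy ↦ ?_, ?_⟩
  · rcases mem_insert.mp hy with rfl | hy
    · simpa using hUC
    · rw [Function.update_of_ne (ne_of_mem_of_not_mem hy hx)]; exact hφC y hy
  · rw [coe_insert]
    refine Set.PairwiseDisjoint.insert_of_notMem ?_ hx fun y hy ↦ ?_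
    · exact hφ.mono_on fun y hy ↦ by rw [Function.update_of_ne (ne_of_mem_of_not_mem hy hx)]
    · rw [Function.update_self, Function.update_of_ne (ne_of_mem_of_not_mem hy hx)]
      exact hUφ y hy

lemma exists_pairwiseDisjoint_exchange {D : Finset (Finset α)}
    (hD : (D : Set (Finset α)).PairwiseDisjoint id) {X : Finset α} {φ : α → Finset α}
    (hφA : ∀ x ∈ X, φ x ∩ D.sup id = {x}) (hφ : (X : Set α).PairwiseDisjoint φ) :
    ∃ B ⊆ D ∪ X.image φ, (B : Set (Finset α)).PairwiseDisjoint id ∧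
      #D + #X ≤ #B + #{W ∈ D | ¬Disjoint W X} := by
  have hxφ : ∀ x ∈ X, x ∈ φ x := fun x hx ↦
    (mem_inter.mp (mem_inter_of_inter_eq_singleton (hφA x hx))).1
  have hinj : Set.InjOn φ X := fun x hx y hy h ↦ by
    by_contra hxy
    exact disjoint_left.mp (hφ hx hy hxy) (hxφ x hx) (h ▸ hxφ x hx)
  set K := {W ∈ D | Disjoint W X}
  have hKφ : ∀ W ∈ K, ∀ x ∈ X, Disjoint W (φ x) := fun W hW x hx ↦ by
    obtain ⟨hWD, hWX⟩ := mem_filter.mp hW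
    refine disjoint_left.mpr fun a haW haφ ↦ ?_
    have hax : a ∈ φ x ∩ D.sup id := mem_inter.mpr ⟨haφ, mem_sup.mpr ⟨W, hWD, haW⟩⟩
    rw [hφA x hx, mem_singleton] at hax
    exact disjoint_left.mp hWX haW (hax ▸ hx)
  have hKdisj : Disjoint K (X.image φ) := disjoint_left.mpr fun W hW hW' ↦ by
    obtain ⟨x, hx, rfl⟩ := mem_image.mp hW'
    exact disjoint_left.mp (mem_filter.mp hW).2 (hxφ x hx) hx
  refine ⟨K ∪ X.image φ, union_subset_union (filter_subset _ _) subset_rfl, ?_, ?_⟩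
  · rw [coe_union, coe_image]
    refine (hD.subset (coe_subset.mpr (filter_subset _ _))).union
      (hinj.pairwiseDisjoint_image.mpr hφ) ?_
    rintro W hW _ ⟨x, hx, rfl⟩ -
    exact hKφ W hW x hx
  · rw [card_union_of_disjoint hKdisj, card_image_of_injOn hinj, add_right_comm,
      card_filter_add_card_filter_not]

/-- Otherwise at most `2(k - #D)` of these points, touching few members of `D`, carry pairwise
disjoint members, which replace the touched members of `D` by more sets than were touched. -/
lemma card_filter_lt_of_codegree_le {k m : ℕ} {τ : ℝ} {F D : Finset (Finset α)}
    (hfree : SunflowerFree k F) (hcard : ∀ U ∈ F, #U ≤ m + 1) (hτ : 0 ≤ τ)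
    (hcodeg : ∀ x z, x ≠ z → (#{U ∈ F | x ∈ U ∧ z ∈ U} : ℝ) ≤ τ)
    (hDF : D ⊆ F) (hD : (D : Set (Finset α)).PairwiseDisjoint id) :
    #{x ∈ D.sup id | 2 * ((k : ℝ) - #D) * m * τ < #{U ∈ F | U ∩ D.sup id = {x}}} < k := by
  by_contra! hk
  set A := D.sup id
  set Big := {x ∈ A | 2 * ((k : ℝ) - #D) * m * τ < #{U ∈ F | U ∩ A = {x}}}
  have ht := hfree.card_lt_of_pairwiseDisjoint hDF hD
  have hr : #D + (k - #D) ≤ #Big := by omega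
  obtain ⟨X, hXbig, hX, hXtouch⟩ := exists_subset_card_le_two_mul hD (filter_subset _ A) hr
  have hC : ∀ x ∈ X, ∀ U ∈ {U ∈ F | U ∩ A = {x}}, U ∩ A = {x} ∧ #(U \ A) ≤ m := by
    intro x _ U hU
    obtain ⟨hUF, hUx⟩ := mem_filter.mp hU
    have := card_sdiff_add_card_inter U A
    rw [hUx, card_singleton] at this
    exact ⟨hUx, by linarith [hcard U hUF]⟩
  obtain ⟨φ, hφC, hφ⟩ := exists_pairwiseDisjoint_transversal hC fun x hx Z hZA hZ ↦ by
    refine exists_disjoint_of_card_mul_lt (τ := τ) (fun z hz ↦ ?_) ?_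
    · have hxz : x ≠ z := fun h ↦ disjoint_left.mp hZA hz (h ▸ (mem_filter.mp (hXbig hx)).1)
      refine le_trans ?_ (hcodeg x z hxz)
      refine Nat.cast_le.mpr (card_le_card fun U hU ↦ ?_)
      obtain ⟨hU, hzU⟩ := mem_filter.mp hU
      obtain ⟨hUF, hUx⟩ := mem_filter.mp hU
      exact mem_filter.mpr ⟨hUF, (mem_inter.mp (mem_inter_of_inter_eq_singleton hUx)).1, hzU⟩
    · have hZ' : (#Z : ℝ) ≤ 2 * ((k : ℝ) - #D) * m := by
        have : #Z ≤ 2 * (k - #D) * m := hZ.trans (Nat.mul_le_mul_right m hX)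
        rw [← Nat.cast_sub ht.le]
        exact_mod_cast this
      exact (mul_le_mul_of_nonneg_right hZ' hτ).trans_lt (mem_filter.mp (hXbig hx)).2
  obtain ⟨B, hB, hBdisj, hBcard⟩ :=
    exists_pairwiseDisjoint_exchange hD (fun x hx ↦ (mem_filter.mp (hφC x hx)).2) hφ
  have hBF : B ⊆ F := hB.trans <| union_subset hDF <|
    image_subset_iff.mpr fun x hx ↦ (mem_filter.mp (hφC x hx)).1
  have := hfree.card_lt_of_pairwiseDisjoint hBF hBdisj
  omega

lemma sum_card_filter_inter_eq_singleton_le {k m : ℕ} {Φ τ : ℝ} {F D : Finset (Finset α)}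
    (hfree : SunflowerFree k F) (hcard : ∀ U ∈ F, #U ≤ m + 1) (hΦ : 0 ≤ Φ) (hτ : 0 ≤ τ)
    (hdeg : ∀ x, (#{U ∈ F | x ∈ U} : ℝ) ≤ Φ)
    (hcodeg : ∀ x z, x ≠ z → (#{U ∈ F | x ∈ U ∧ z ∈ U} : ℝ) ≤ τ)
    (hDF : D ⊆ F) (hD : (D : Set (Finset α)).PairwiseDisjoint id) :
    ∑ x ∈ D.sup id, (#{U ∈ F | U ∩ D.sup id = {x}} : ℝ) ≤
      ((k : ℝ) - 1) * Φ + #(D.sup id) * (2 * ((k : ℝ) - #D) * m * τ) := by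
  set A := D.sup id
  have hθ : 0 ≤ 2 * ((k : ℝ) - #D) * m * τ := by
    have : (#D : ℝ) + 1 ≤ k := by exact_mod_cast hfree.card_lt_of_pairwiseDisjoint hDF hD
    have : 0 ≤ (k : ℝ) - #D := by linarith
    positivity
  have hle : ∀ x ∈ A, (#{U ∈ F | U ∩ A = {x}} : ℝ) ≤ Φ := fun x _ ↦ by
    refine (Nat.cast_le.mpr (card_le_card fun U hU ↦ ?_)).trans (hdeg x)
    obtain ⟨hUF, hUx⟩ := mem_filter.mp hU
    exact mem_filter.mpr ⟨hUF, (mem_inter.mp (mem_inter_of_inter_eq_singleton hUx)).1⟩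
  have hbig : (#{x ∈ A | 2 * ((k : ℝ) - #D) * m * τ < #{U ∈ F | U ∩ A = {x}}} : ℝ) + 1 ≤ k := by
    exact_mod_cast card_filter_lt_of_codegree_le hfree hcard hτ hcodeg hDF hD
  have := mul_le_mul_of_nonneg_right (le_sub_iff_add_le.mpr hbig) hΦ
  linarith [sum_le_card_filter_lt_mul_add A hle hθ]

theorem two_mul_card_le_of_codegree_le {k m : ℕ} {Φ τ : ℝ} {F : Finset (Finset α)}
    (hfree : SunflowerFree k F) (hcard : ∀ U ∈ F, #U ≤ m + 1) (hΦ : 0 ≤ Φ) (hτ : 0 ≤ τ)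
    (hdeg : ∀ x, (#{U ∈ F | x ∈ U} : ℝ) ≤ Φ)
    (hcodeg : ∀ x z, x ≠ z → (#{U ∈ F | x ∈ U ∧ z ∈ U} : ℝ) ≤ τ) :
    ∃ t < k, 2 * (#F : ℝ) ≤
      2 + ((k : ℝ) - 1) * Φ + t * (m + 1) * (Φ + 2 * ((k : ℝ) - t) * m * τ) := by
  obtain ⟨D, hDF, hD, hmax⟩ := exists_pairwiseDisjoint_maximal F
  have ht := hfree.card_lt_of_pairwiseDisjoint hDF hD
  refine ⟨#D, ht, ?_⟩
  set A := D.sup id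
  have hθ : 0 ≤ 2 * ((k : ℝ) - #D) * m * τ := by
    have : (#D : ℝ) + 1 ≤ k := by exact_mod_cast ht
    have : 0 ≤ (k : ℝ) - #D := by linarith
    positivity
  have hA : (#A : ℝ) ≤ #D * (m + 1) := by
    have : #(D.sup id) ≤ #D * (m + 1) := by
      rw [sup_eq_biUnion]
      exact card_biUnion_le_card_mul D id _ fun W hW ↦ hcard W (hDF hW)
    exact_mod_cast this
  have hempty : (#{U ∈ F | Disjoint U A} : ℝ) ≤ 1 := by
    refine Nat.cast_le_one.mpr (card_le_one.mpr fun U hU V hV ↦ ?_)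
    rw [hmax U (mem_filter.mp hU).1 (mem_filter.mp hU).2,
      hmax V (mem_filter.mp hV).1 (mem_filter.mp hV).2]
  have hsingle := sum_card_filter_inter_eq_singleton_le hfree hcard hΦ hτ hdeg hcodeg hDF hD
  have hdegsum : (∑ x ∈ A, #{U ∈ F | x ∈ U} : ℝ) ≤ #A * Φ := by
    simpa using sum_le_card_nsmul A _ Φ fun x _ ↦ hdeg x
  have hcount : 2 * (#F : ℝ) ≤ 2 * #{U ∈ F | Disjoint U A} +
      ∑ x ∈ A, (#{U ∈ F | U ∩ A = {x}} : ℝ) + ∑ x ∈ A, (#{U ∈ F | x ∈ U} : ℝ) := by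
    exact_mod_cast two_mul_card_le F A
  have := mul_le_mul_of_nonneg_right hA (add_nonneg hΦ hθ)
  linarith

lemma SunflowerFree.card_filter_subset_lt {k s : ℕ} {b : ℝ} {F : Finset (Finset α)}
    (hfree : SunflowerFree k F) (S : Finset α) (hcard : ∀ U ∈ F, #U ≤ s + #S)
    (hb : ∀ {G : Finset (Finset α)}, (∀ V ∈ G, #V ≤ s) → SunflowerFree k G → (#G : ℝ) < b) :
    (#{U ∈ F | S ⊆ U} : ℝ) < b := by
  rw [← card_link]
  exact hb (fun V hV ↦ by have := card_add_card_le_of_mem_link hcard hV; omega) (hfree.link S)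

lemma card_lt_sunflowerBound_add_two {k n : ℕ} (hk : 2 ≤ k) {F : Finset (Finset α)}
    (hcard : ∀ U ∈ F, #U ≤ n + 2) (hfree : SunflowerFree k F)
    (hdeg : ∀ x, (#{U ∈ F | x ∈ U} : ℝ) ≤ sunflowerBound k (n + 1))
    (hcodeg : ∀ x z, x ≠ z → (#{U ∈ F | x ∈ U ∧ z ∈ U} : ℝ) ≤ sunflowerBound k n) :
    (#F : ℝ) < sunflowerBound k (n + 2) := by
  have hpos := sunflowerBound_pos (by omega : 0 < k)
  obtain ⟨t, -, hF⟩ := two_mul_card_le_of_codegree_le hfree (m := n + 1) hcard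
    (hpos (n + 1)).le (hpos n).le hdeg hcodeg
  have hθ : (k : ℝ) * (2 * (k - t) * (n + 1) * sunflowerBound k n) =
      2 * (k - t) * ρ * sunflowerBound k (n + 1) := by
    linear_combination -(2 * (k - t)) * ρ_mul_sunflowerBound_succ k n
  have hlt := ρ_mul_lt_of_two_mul_le (by exact_mod_cast hk) (s := n + 2)
    (by linarith [n.cast_nonneg (α := ℝ)]) (ρ_mul_le_sunflowerBound_succ hk n) (t := t)
    (N := #F) hθ (by push_cast at hF ⊢; linarith)
  have hsucc := ρ_mul_sunflowerBound_succ k (n + 1)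
  push_cast at hsucc
  exact lt_of_mul_lt_mul_left (by linarith) ρ_pos.le

theorem card_lt_sunflowerBound {k s : ℕ} (hk : 0 < k) {F : Finset (Finset α)}
    (hcard : ∀ U ∈ F, #U ≤ s) (hfree : SunflowerFree k F) : (#F : ℝ) < sunflowerBound k s := by
  obtain rfl | hk2 : k = 1 ∨ 2 ≤ k := by omega
  · rw [hfree.eq_empty_of_one, card_empty, Nat.cast_zero]
    exact sunflowerBound_pos one_pos s
  induction s using Nat.strong_induction_on generalizing F with
  | _ s ih =>
  obtain ⟨hρ, -⟩ := ρ_bounds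
  rcases s with _ | _ | n
  · have : #F ≤ 1 := card_le_one.mpr fun U hU V hV ↦ by
      rw [card_eq_zero.mp (Nat.le_zero.mp (hcard U hU)),
        card_eq_zero.mp (Nat.le_zero.mp (hcard V hV))]
    have : (#F : ℝ) ≤ 1 := by exact_mod_cast this
    rw [sunflowerBound]
    simp only [pow_zero, mul_one, Nat.factorial_zero, Nat.cast_one]
    nlinarith
  · have := hfree.card_lt_of_pairwiseDisjoint subset_rfl (pairwiseDisjoint_of_card_le_one hcard)
    have : (#F : ℝ) + 1 ≤ k := by exact_mod_cast this
    have := ρ_mul_le_sunflowerBound_succ hk2 0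
    nlinarith
  · refine card_lt_sunflowerBound_add_two hk2 hcard hfree (fun x ↦ ?_) fun x z hxz ↦ ?_
    · have := hfree.card_filter_subset_lt {x} (by simpa using hcard) (ih (n + 1) (by omega))
      simpa using this.le
    · have := hfree.card_filter_subset_lt {x, z} (by simpa [card_pair hxz] using hcard)
        (ih n (by omega))
      simpa [insert_subset_iff] using this.le

end Sunflower

theorem statement1_general (α : Type*) [DecidableEq α] (k s : ℕ) (hk : 0 < k)
    (F : Finset (Finset α)) (hcard : ∀ U ∈ F, U.card ≤ s)
    (hF : (Real.sqrt 10 - 2) ^ 2 * ((k : ℝ) / (Real.sqrt 10 - 2)) ^ s *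
        (Nat.factorial s : ℝ) ≤ (F.card : ℝ)) :
    ∃ B ⊆ F, B.card = k ∧ IsSunflower B := by
  by_contra hfree
  exact (Sunflower.card_lt_sunflowerBound hk hcard hfree).not_ge hF

/-- Statement I: any family `F` of sets of cardinality at most `s` with
`|F| ≥ (√10 − 2)² · (k/(√10 − 2))^s · s!` contains a sunflower of cardinality `k`. -/
theorem statement1 (α : Type*) [DecidableEq α] (k s : ℕ) (hk : 0 < k) (hs : 0 < s)
    (F : Finset (Finset α)) (hcard : ∀ U ∈ F, U.card ≤ s)
    (hF : (Real.sqrt 10 - 2) ^ 2 * ((k : ℝ) / (Real.sqrt 10 - 2)) ^ s *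
        (Nat.factorial s : ℝ) ≤ (F.card : ℝ)) :
    ∃ B ⊆ F, B.card = k ∧ IsSunflower B :=
  statement1_general α k s hk F hcard hF
end

section
/- (Erdős–Rado sunflower lemma) For all positive integers s and k, every finite family F of finite sets, each of cardinality at most s, with |F| > (k − 1)^s · s! contains a sunflower of cardinality k. -/
section

open Finset

variable {α : Type*} [DecidableEq α]

theorem IsSunflower.of_pairwiseDisjoint {B : Finset (Finset α)}
    (hB : (B : Set (Finset α)).PairwiseDisjoint id) : IsSunflower B :=
  ⟨∅, fun _ hU _ hV hUV => disjoint_iff_inter_eq_empty.mp (hB hU hV hUV)⟩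

theorem isSunflower_singleton (U : Finset α) : IsSunflower {U} :=
  ⟨∅, by simp⟩

theorem IsSunflower.image_insert {B : Finset (Finset α)} (hB : IsSunflower B) (x : α) :
    IsSunflower (B.image (insert x)) := by
  obtain ⟨Y, hY⟩ := hB
  refine ⟨insert x Y, ?_⟩
  simp only [mem_image]
  rintro _ ⟨U, hU, rfl⟩ _ ⟨V, hV, rfl⟩ hUV
  rw [← insert_inter_distrib, hY U hU V hV (ne_of_apply_ne _ hUV)]

def link (F : Finset (Finset α)) (x : α) : Finset (Finset α) :=
  {U ∈ F | x ∈ U}.image (·.erase x)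

theorem card_link (F : Finset (Finset α)) (x : α) : #(link F x) = #{U ∈ F | x ∈ U} := by
  refine card_image_of_injOn fun U hU V hV hUV => ?_
  simp only [coe_filter, Set.mem_ofPred_eq] at hU hV
  rw [← insert_erase hU.2, ← insert_erase hV.2]
  exact congrArg (insert x) hUV

theorem card_le_of_mem_link {F : Finset (Finset α)} {x : α} {s : ℕ}
    (hF : ∀ U ∈ F, #U ≤ s + 1) : ∀ U ∈ link F x, #U ≤ s := by
  simp only [link, mem_image, mem_filter]
  rintro _ ⟨U, ⟨hUF, hxU⟩, rfl⟩
  have := hF U hUF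
  rw [card_erase_of_mem hxU]
  omega

theorem exists_sunflower_of_subset_link {F B : Finset (Finset α)} {x : α}
    (hB : B ⊆ link F x) (hsf : IsSunflower B) :
    ∃ B' ⊆ F, #B' = #B ∧ IsSunflower B' := by
  have hmem : ∀ V ∈ B, ∃ U ∈ F, x ∈ U ∧ U.erase x = V := by
    intro V hV
    simpa [link, and_assoc] using hB hV
  refine ⟨B.image (insert x), ?_, card_image_of_injOn ?_, hsf.image_insert x⟩
  · simp only [subset_iff, mem_image]
    rintro _ ⟨V, hV, rfl⟩
    obtain ⟨U, hUF, hxU, rfl⟩ := hmem V hV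
    rwa [insert_erase hxU]
  · intro V hV W hW hVW
    obtain ⟨U, -, -, rfl⟩ := hmem V hV
    obtain ⟨U', -, -, rfl⟩ := hmem W hW
    simpa using congrArg (·.erase x) hVW

theorem exists_pairwiseDisjoint_or_exists_hittingSet (F : Finset (Finset α)) {s : ℕ}
    (hF : ∀ U ∈ F, #U ≤ s) (m : ℕ) :
    (∃ D ⊆ F, #D = m + 1 ∧ (D : Set (Finset α)).PairwiseDisjoint id) ∨
      ∃ W : Finset α, #W ≤ m * s ∧ ∀ U ∈ F, U.Nonempty → ∃ x ∈ W, x ∈ U := by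
  classical
  obtain ⟨D, hD, hDmax⟩ := exists_max_image
    (F.powerset.filter fun D : Finset (Finset α) => (D : Set (Finset α)).PairwiseDisjoint id)
    card ⟨∅, by simp⟩
  rw [mem_filter, mem_powerset] at hD
  obtain ⟨hDF, hDdisj⟩ := hD
  by_cases hm : m + 1 ≤ #D
  · obtain ⟨D', hD'D, hD'⟩ := exists_subset_card_eq hm
    exact .inl ⟨D', hD'D.trans hDF, hD', hDdisj.subset (coe_subset.mpr hD'D)⟩
  refine .inr ⟨D.biUnion id, (card_biUnion_le_card_mul _ _ _ fun V hV => hF V (hDF hV)).trans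
    (Nat.mul_le_mul_right _ (by omega)), fun U hUF ⟨y, hy⟩ => ?_⟩
  by_cases hUD : U ∈ D
  · exact ⟨y, mem_biUnion.mpr ⟨U, hUD, hy⟩, hy⟩
  have hnot : ¬((insert U D : Finset (Finset α)) : Set (Finset α)).PairwiseDisjoint id := by
    intro h
    have := hDmax (insert U D) (mem_filter.mpr ⟨mem_powerset.mpr (insert_subset hUF hDF), h⟩)
    rw [card_insert_of_notMem hUD] at this
    omega
  rw [coe_insert, Set.pairwiseDisjoint_insert_of_notMem hUD] at hnot
  push Not at hnot
  obtain ⟨V, hV, hUV⟩ := hnot hDdisj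
  obtain ⟨x, hxU, hxV⟩ := not_disjoint_iff.mp hUV
  exact ⟨x, mem_biUnion.mpr ⟨V, hV, hxV⟩, hxU⟩

theorem exists_lt_card_filter_mem {F : Finset (Finset α)} {W : Finset α}
    (hW : ∀ U ∈ F, ∃ x ∈ W, x ∈ U) {M : ℕ} (h : #W * M < #F) :
    ∃ x ∈ W, M < #{U ∈ F | x ∈ U} := by
  by_contra! hle
  have hcover : F ⊆ W.biUnion fun x => {U ∈ F | x ∈ U} := fun U hU => by
    obtain ⟨x, hxW, hxU⟩ := hW U hU
    exact mem_biUnion.mpr ⟨x, hxW, mem_filter.mpr ⟨hU, hxU⟩⟩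
  exact (card_le_card hcover |>.trans (card_biUnion_le_card_mul _ _ _ hle)).not_gt h

theorem exists_pairwiseDisjoint_or_exists_lt_card_filter_mem (F : Finset (Finset α))
    {s M k : ℕ} (hF : ∀ U ∈ F, #U ≤ s) (hs : 0 < s) (hM : 0 < M) (hcard : k * s * M < #F) :
    (∃ B ⊆ F, #B = k + 1 ∧ (B : Set (Finset α)).PairwiseDisjoint id) ∨
      ∃ x, M < #{U ∈ F | x ∈ U} := by
  by_cases hempty : ∅ ∈ F
  · obtain _ | m := k
    · exact .inl ⟨{∅}, by simpa, rfl, by simp⟩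
    -- `∅` meets no hitting set, so it must be left out of the count; it pays for this by extending
    -- any disjoint family, so only `m + 1` disjoint nonempty members are needed.
    obtain ⟨D, hDF, hD, hDdisj⟩ | ⟨W, hW, hWF⟩ := exists_pairwiseDisjoint_or_exists_hittingSet
      (F.erase ∅) (fun U hU => hF U (mem_of_mem_erase hU)) m
    · have hemptyD : ∅ ∉ D := fun h => by simpa using hDF h
      refine .inl ⟨insert ∅ D, insert_subset hempty (hDF.trans (erase_subset _ _)),
        by rw [card_insert_of_notMem hemptyD, hD], ?_⟩
      rw [coe_insert]
      exact hDdisj.insert fun _ _ _ => disjoint_bot_left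
    have hlt : #W * M < #(F.erase ∅) := by
      have hWM := Nat.mul_le_mul_right M hW
      have hsM : 0 < s * M := Nat.mul_pos hs hM
      have : (m + 1) * s * M = m * s * M + s * M := by ring
      rw [card_erase_of_mem hempty]
      omega
    obtain ⟨x, -, hx⟩ := exists_lt_card_filter_mem
      (fun U hU => hWF U hU (nonempty_iff_ne_empty.mpr (ne_of_mem_erase hU))) hlt
    exact .inr ⟨x, hx.trans_le (card_le_card (filter_subset_filter _ (erase_subset _ _)))⟩
  · obtain hD | ⟨W, hW, hWF⟩ := exists_pairwiseDisjoint_or_exists_hittingSet F hF k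
    · exact .inl hD
    obtain ⟨x, -, hx⟩ := exists_lt_card_filter_mem
      (fun U hU => hWF U hU (nonempty_iff_ne_empty.mpr (ne_of_mem_of_not_mem hU hempty)))
      ((Nat.mul_le_mul_right M hW).trans_lt hcard)
    exact .inr ⟨x, hx⟩

theorem exists_sunflower_of_pow_mul_factorial_lt_card {k : ℕ} (hk : 0 < k) (s : ℕ)
    (F : Finset (Finset α)) (hF : ∀ U ∈ F, #U ≤ s) (hcard : (k - 1) ^ s * s.factorial < #F) :
    ∃ B ⊆ F, #B = k ∧ IsSunflower B := by
  induction s generalizing F with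
  | zero =>
    have hF' : F ⊆ {∅} := fun U hU => by simpa using hF U hU
    have := card_le_card hF'
    simp only [pow_zero, Nat.factorial_zero, mul_one, card_singleton] at hcard this
    omega
  | succ s ih =>
    obtain ⟨j, rfl⟩ : ∃ j, k = j + 1 := Nat.exists_eq_succ_of_ne_zero hk.ne'
    obtain rfl | hj := Nat.eq_zero_or_pos j
    · obtain ⟨U, hU⟩ := card_pos.mp (hcard.trans_le' (Nat.zero_le _))
      exact ⟨{U}, singleton_subset_iff.mpr hU, card_singleton U, isSunflower_singleton U⟩
    rw [Nat.add_sub_cancel] at ih hcard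
    have hcard' : j * (s + 1) * (j ^ s * s.factorial) < #F := by
      rwa [pow_succ, Nat.factorial_succ, show j ^ s * j * ((s + 1) * s.factorial) =
        j * (s + 1) * (j ^ s * s.factorial) by ring] at hcard
    obtain ⟨B, hBF, hB, hBdisj⟩ | ⟨x, hx⟩ := exists_pairwiseDisjoint_or_exists_lt_card_filter_mem
      F hF s.succ_pos (Nat.mul_pos (pow_pos hj s) s.factorial_pos) hcard'
    · exact ⟨B, hBF, hB, .of_pairwiseDisjoint hBdisj⟩
    obtain ⟨B, hB, hBk, hBsf⟩ := ih (link F x) (card_le_of_mem_link hF) (by rwa [card_link])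
    obtain ⟨B', hB'F, hB', hB'sf⟩ := exists_sunflower_of_subset_link hB hBsf
    exact ⟨B', hB'F, hB'.trans hBk, hB'sf⟩

end

theorem statement3_general (α : Type*) [DecidableEq α] (k s : ℕ) (hk : 0 < k)
    (F : Finset (Finset α)) (hcard : ∀ U ∈ F, U.card ≤ s)
    (hF : (k - 1) ^ s * Nat.factorial s < F.card) :
    ∃ B ⊆ F, B.card = k ∧ IsSunflower B :=
  exists_sunflower_of_pow_mul_factorial_lt_card hk s F hcard hF

/-- The Erdős–Rado sunflower lemma: any family `F` of sets of cardinality at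
most `s` with `|F| > (k − 1)^s · s!` contains a sunflower of cardinality `k`. -/
theorem statement3 (α : Type*) [DecidableEq α] (k s : ℕ) (hk : 0 < k) (hs : 0 < s)
    (F : Finset (Finset α)) (hcard : ∀ U ∈ F, U.card ≤ s)
    (hF : (k - 1) ^ s * Nat.factorial s < F.card) :
    ∃ B ⊆ F, B.card = k ∧ IsSunflower B :=
  statement3_general α k s hk F hcard hF
end

section
/- For every real ε with 0 < ε < 1/8 there exists a constant c > 0 such that for all integers s ≥ 2 and k ≥ 2, Φ₂(s) ≤ (c·k/ln(min(k, s)))^s · s!. -/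
/-- `p_j`: equals `ε` for `j = 1` (and `j = 0`) and `ε · ln (min j k)` for `j ≥ 2`. -/
noncomputable def pstep (ε : ℝ) (k : ℕ) (j : ℕ) : ℝ :=
  if j ≤ 1 then ε else ε * Real.log (min (j : ℝ) (k : ℝ))

/-- `Φ₂(s) = k^s · s! / (p₁ p₂ ⋯ p_s)`. -/
noncomputable def Phi2 (ε : ℝ) (k : ℕ) (s : ℕ) : ℝ :=
  ((k : ℝ) ^ s * (Nat.factorial s : ℝ)) / ∏ j ∈ Finset.Icc 1 s, pstep ε k j

/-!
With `m = min k s`, every factor satisfies `p_j ≥ (ε ln m / 3) · min(j, m) / m`: for `j ≥ m` because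
`ln` is monotone, for `2 ≤ j < m` because `j ln m ≤ 3 m ln j`. The normalised weights multiply to
`∏_{j ≤ s} min(j, m) / m = m! / m^m ≥ e^{-m} ≥ e^{-s}`, so `p₁ ⋯ p_s ≥ (ε ln m / (3e))^s` and
`c = 3e / ε` works.
-/

open Real Finset
open scoped Nat

lemma Real.mul_log_le_three_mul_mul_log {x y : ℝ} (hx : 2 ≤ x) (hxy : x ≤ y) :
    x * log y ≤ 3 * y * log x := by
  have hx0 : 0 < x := by linarith
  have hhalf : 1 / 2 ≤ log x := by
    linarith [log_two_gt_d9, log_le_log two_pos hx]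
  have hy0 : 0 < y := by linarith
  have hratio : log y - log x ≤ y / x - 1 := by
    rw [← log_div hy0.ne' hx0.ne']
    exact log_le_sub_one_of_pos (by positivity)
  have hgap : x * (log y - log x) ≤ y - x := by
    calc x * (log y - log x) ≤ x * (y / x - 1) := mul_le_mul_of_nonneg_left hratio hx0.le
      _ = y - x := by field_simp
  nlinarith [mul_le_mul_of_nonneg_right hxy (by linarith : 0 ≤ log x)]

lemma le_pstep {ε : ℝ} {k m j : ℕ} (hε : 0 ≤ ε) (hm : 0 < m) (hmk : m ≤ k) (hj : 1 ≤ j) :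
    ε * log m / 3 * ((min j m : ℕ) / m) ≤ pstep ε k j := by
  have hm' : (0 : ℝ) < m := by exact_mod_cast hm
  have hlogm : 0 ≤ log m := log_nonneg (Nat.one_le_cast.2 hm)
  rcases eq_or_lt_of_le hj with rfl | hj2
  · have : log m ≤ 3 * m := by linarith [log_le_sub_one_of_pos hm']
    rw [pstep, if_pos le_rfl, Nat.min_eq_left (by omega), Nat.cast_one]
    rw [_root_.div_mul_div_comm, mul_one, div_le_iff₀ (by positivity)]
    nlinarith
  rw [pstep, if_neg (by omega)]
  rcases le_or_gt m j with hmj | hjm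
  · rw [Nat.min_eq_right hmj, div_self hm'.ne', mul_one]
    have : log m ≤ log (min (j : ℝ) k) :=
      log_le_log hm' (le_min (by exact_mod_cast hmj) (by exact_mod_cast hmk))
    nlinarith
  · rw [Nat.min_eq_left hjm.le, min_eq_left (by exact_mod_cast (hjm.trans_le hmk).le)]
    have := mul_log_le_three_mul_mul_log (by exact_mod_cast hj2 : (2 : ℝ) ≤ j)
      (by exact_mod_cast hjm.le : (j : ℝ) ≤ m)
    rw [_root_.div_mul_div_comm, div_le_iff₀ (by positivity)]
    nlinarith

lemma prod_Icc_min_div_eq {m s : ℕ} (hm : 0 < m) (hms : m ≤ s) :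
    ∏ j ∈ Icc 1 s, ((min j m : ℕ) : ℝ) / m = m ! / m ^ m := by
  have hm' : (m : ℝ) ≠ 0 := by exact_mod_cast hm.ne'
  rw [← zero_add 1, Icc_add_one_left_eq_Ioc, ← prod_Ioc_consecutive _ (Nat.zero_le m) hms]
  have hhead : ∏ j ∈ Ioc 0 m, ((min j m : ℕ) : ℝ) / m = m ! / m ^ m := by
    rw [prod_div_distrib, prod_const, Nat.card_Ioc, Nat.sub_zero,
      prod_congr rfl fun j hj => by rw [Nat.min_eq_left (mem_Ioc.1 hj).2], ← Nat.cast_prod,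
      ← Icc_add_one_left_eq_Ioc, zero_add, ← Ico_add_one_right_eq_Icc, prod_Ico_id_eq_factorial]
  have htail : ∏ j ∈ Ioc m s, ((min j m : ℕ) : ℝ) / m = 1 :=
    prod_eq_one fun j hj => by rw [Nat.min_eq_right (mem_Ioc.1 hj).1.le, div_self hm']
  rw [hhead, htail, mul_one]

lemma Real.exp_neg_le_factorial_div_pow (n : ℕ) : exp (-n) ≤ n ! / n ^ n := by
  rcases Nat.eq_zero_or_pos n with rfl | hn
  · simp
  have hpow : (0 : ℝ) < n ^ n := by positivity
  rw [exp_neg, ← one_div, div_le_div_iff₀ (exp_pos _) hpow, one_mul, mul_comm,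
    ← div_le_iff₀ (by positivity)]
  exact pow_div_factorial_le_exp _ (Nat.cast_nonneg n) n

lemma pow_le_prod_pstep {ε : ℝ} {k s : ℕ} (hε : 0 ≤ ε) (hk : 1 ≤ k) (hs : 1 ≤ s) :
    (ε * log (min (k : ℝ) s) / (3 * exp 1)) ^ s ≤ ∏ j ∈ Icc 1 s, pstep ε k j := by
  set m := min k s
  have hm : 0 < m := lt_min hk hs
  have hlog : 0 ≤ log m := log_nonneg (by exact_mod_cast Nat.one_le_iff_ne_zero.2 hm.ne')
  rw [← Nat.cast_min]
  calc (ε * log m / (3 * exp 1)) ^ s = (ε * log m / 3) ^ s * exp (-s) := by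
        rw [div_mul_eq_div_div, div_pow, ← exp_nat_mul, mul_one, exp_neg, div_eq_mul_inv]
    _ ≤ (ε * log m / 3) ^ s * exp (-m) := by gcongr; exact min_le_right k s
    _ ≤ (ε * log m / 3) ^ s * (m ! / m ^ m) := by gcongr; exact exp_neg_le_factorial_div_pow m
    _ = ∏ j ∈ Icc 1 s, ε * log m / 3 * ((min j m : ℕ) / m) := by
        rw [prod_mul_distrib, prod_const, Nat.card_Icc, Nat.add_sub_cancel,
          prod_Icc_min_div_eq hm (min_le_right k s)]
    _ ≤ ∏ j ∈ Icc 1 s, pstep ε k j :=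
        prod_le_prod (fun j _ => by positivity)
          fun j hj => le_pstep hε hm (min_le_left k s) (mem_Icc.1 hj).1

theorem statement4_general (ε : ℝ) (hε0 : 0 < ε) :
    ∃ c : ℝ, 0 < c ∧ ∀ s k : ℕ, 2 ≤ s → 2 ≤ k →
      Phi2 ε k s ≤ (c * (k : ℝ) / Real.log (min (k : ℝ) (s : ℝ))) ^ s *
        (Nat.factorial s : ℝ) := by
  refine ⟨3 * exp 1 / ε, by positivity, fun s k hs hk => ?_⟩
  have hlog : 0 < log (min (k : ℝ) s) :=
    log_pos (lt_min (by exact_mod_cast hk) (by exact_mod_cast hs))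
  have hbound : 0 < ε * log (min (k : ℝ) s) / (3 * exp 1) := by positivity
  calc Phi2 ε k s ≤ (k : ℝ) ^ s * s ! / (ε * log (min (k : ℝ) s) / (3 * exp 1)) ^ s :=
        div_le_div_of_nonneg_left (by positivity) (pow_pos hbound s)
          (pow_le_prod_pstep hε0.le (by omega) (by omega))
    _ = (k / (ε * log (min (k : ℝ) s) / (3 * exp 1))) ^ s * s ! := by
        rw [div_pow (k : ℝ), div_mul_eq_mul_div]
    _ = (3 * exp 1 / ε * k / log (min (k : ℝ) s)) ^ s * s ! := by
        congr 2
        field_simp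

/-- For every `ε ∈ (0, 1/8)` there is a constant `c > 0` with
`Φ₂(s) ≤ (c·k / ln (min k s))^s · s!` for all `s ≥ 2` and `k ≥ 2`. -/
theorem statement4 (ε : ℝ) (hε0 : 0 < ε) (hε : ε < 1 / 8) :
    ∃ c : ℝ, 0 < c ∧ ∀ s k : ℕ, 2 ≤ s → 2 ≤ k →
      Phi2 ε k s ≤ (c * (k : ℝ) / Real.log (min (k : ℝ) (s : ℝ))) ^ s *
        (Nat.factorial s : ℝ) :=
  statement4_general ε hε0
end

section
/- For every real ε with 0 < ε < 1/8, every integer k ≥ 2, every integer s ≥ 2, and every positive integer j < s: Φ₂(s) > Φ₂(s − j) · exp(j·ln(k·s/p_s) − j²/s − 1). -/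
open Real Finset

lemma mul_log_add_one_sub_log_le_one {b : ℝ} (hb : 0 ≤ b) : b * (log (b + 1) - log b) ≤ 1 := by
  rcases hb.eq_or_lt with rfl | hb
  · simp
  rw [← log_div (by positivity) hb.ne']
  calc b * log ((b + 1) / b) ≤ b * ((b + 1) / b - 1) := by
        gcongr; exact log_le_sub_one_of_pos (by positivity)
    _ = 1 := by field_simp; ring

lemma mul_log_sub_mul_log_le_sum_log (a j : ℕ) :
    ((a + j : ℕ) : ℝ) * log (a + j : ℕ) - a * log a - j ≤ ∑ i ∈ Ioc a (a + j), log i := by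
  induction j with
  | zero => simp
  | succ j ih =>
    have hstep := mul_log_add_one_sub_log_le_one (b := ((a + j : ℕ) : ℝ)) (by positivity)
    rw [mul_sub] at hstep
    rw [← add_assoc, sum_Ioc_succ_top (by omega)]
    push_cast at *
    linarith

lemma mul_log_sub_sq_div_le_sum_log {a : ℕ} (ha : 0 < a) (j : ℕ) :
    j * log (a + j : ℕ) - (j : ℝ) ^ 2 / (a + j : ℕ) ≤ ∑ i ∈ Ioc a (a + j), log i := by
  have ha' : (0 : ℝ) < a := by exact_mod_cast ha
  have hs : (0 : ℝ) < (a + j : ℕ) := by exact_mod_cast (by omega : 0 < a + j)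
  have hgap : (j : ℝ) - j ^ 2 / (a + j : ℕ) ≤ a * (log (a + j : ℕ) - log a) := by
    have := one_sub_inv_le_log_of_pos (div_pos hs ha')
    rw [inv_div, log_div hs.ne' ha'.ne'] at this
    calc (j : ℝ) - j ^ 2 / (a + j : ℕ) = a * (1 - a / (a + j : ℕ)) := by
          push_cast at *; field_simp; ring
      _ ≤ _ := by gcongr
  have := mul_log_sub_mul_log_le_sum_log a j
  rw [mul_sub] at hgap
  push_cast at *
  linarith

section

variable {ε : ℝ} {k : ℕ}

lemma pstep_pos (hε : 0 < ε) (hk : 2 ≤ k) (i : ℕ) : 0 < pstep ε k i := by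
  unfold pstep
  split_ifs with hi
  · exact hε
  · have h2 : (2 : ℝ) ≤ min (i : ℝ) k :=
      le_min (by exact_mod_cast (by omega : 2 ≤ i)) (by exact_mod_cast hk)
    exact mul_pos hε (log_pos (by linarith))

lemma pstep_le_pstep (hε : 0 ≤ ε) (hk : 0 < k) {i n : ℕ} (hi : 2 ≤ i) (hin : i ≤ n) :
    pstep ε k i ≤ pstep ε k n := by
  unfold pstep
  rw [if_neg (by omega), if_neg (by omega)]
  gcongr

lemma Phi2_pos (hε : 0 < ε) (hk : 2 ≤ k) (n : ℕ) : 0 < Phi2 ε k n := by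
  have hk0 : (0 : ℝ) < k := by exact_mod_cast (by omega : 0 < k)
  have hp : 0 < ∏ i ∈ Icc 1 n, pstep ε k i := prod_pos fun i _ => pstep_pos hε hk i
  unfold Phi2
  positivity

lemma Phi2_succ (n : ℕ) :
    Phi2 ε k (n + 1) = Phi2 ε k n * (k * (n + 1 : ℕ) / pstep ε k (n + 1)) := by
  rw [Phi2, Phi2, prod_Icc_succ_top (by omega), pow_succ, Nat.factorial_succ, Nat.cast_mul,
    ← mul_div_mul_comm]
  ring

lemma Phi2_add (a j : ℕ) :
    Phi2 ε k (a + j) = Phi2 ε k a * ∏ i ∈ Ioc a (a + j), (k * i / pstep ε k i : ℝ) := by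
  induction j with
  | zero => simp
  | succ j ih => rw [← add_assoc, Phi2_succ, ih, prod_Ioc_succ_top (by omega), mul_assoc]

lemma exp_le_prod_Ioc (hε : 0 < ε) (hk : 2 ≤ k) {a : ℕ} (ha : 0 < a) (j : ℕ) :
    exp (j * log (k * (a + j : ℕ) / pstep ε k (a + j)) - (j : ℝ) ^ 2 / (a + j : ℕ)) ≤
      ∏ i ∈ Ioc a (a + j), (k * i / pstep ε k i : ℝ) := by
  set s := a + j with hs_def
  have hk0 : (0 : ℝ) < k := by exact_mod_cast (by omega : 0 < k)
  have hpos : ∀ i ∈ Ioc a s, (0 : ℝ) < k * i / pstep ε k i := fun i hi => by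
    have : (0 : ℝ) < i := by exact_mod_cast (by simp at hi; omega : 0 < i)
    have := pstep_pos hε hk i
    positivity
  have hterm : ∀ i ∈ Ioc a s, log k + log i - log (pstep ε k s) ≤ log (k * i / pstep ε k i) :=
    fun i hi => by
      have hi' := mem_Ioc.1 hi
      have : (0 : ℝ) < i := by exact_mod_cast (by omega : 0 < i)
      rw [log_div (by positivity) (pstep_pos hε hk i).ne', log_mul hk0.ne' this.ne']
      have := log_le_log (pstep_pos hε hk i) (pstep_le_pstep hε.le (by omega) (by omega) hi'.2)
      linarith
  rw [← le_log_iff_exp_le (prod_pos hpos), log_prod fun i hi => (hpos i hi).ne']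
  have hs : (0 : ℝ) < s := by exact_mod_cast (by omega : 0 < s)
  calc (j : ℝ) * log (k * s / pstep ε k s) - j ^ 2 / s
        = j * (log k - log (pstep ε k s)) + (j * log s - j ^ 2 / s) := by
          rw [log_div (by positivity) (pstep_pos hε hk s).ne', log_mul hk0.ne' hs.ne']; ring
    _ ≤ j * (log k - log (pstep ε k s)) + ∑ i ∈ Ioc a s, log (i : ℝ) := by
          gcongr; exact mul_log_sub_sq_div_le_sum_log ha j
    _ = ∑ i ∈ Ioc a s, (log k + log i - log (pstep ε k s)) := by
          rw [sum_sub_distrib, sum_add_distrib, sum_const, sum_const, Nat.card_Ioc, hs_def,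
            Nat.add_sub_cancel_left, nsmul_eq_mul, nsmul_eq_mul]
          ring
    _ ≤ _ := sum_le_sum hterm

end

theorem statement5_general (ε : ℝ) (hε0 : 0 < ε) (k : ℕ) (hk : 2 ≤ k)
    (s : ℕ) (j : ℕ) (hjs : j < s) :
    Phi2 ε k (s - j) *
        Real.exp ((j : ℝ) * Real.log ((k : ℝ) * (s : ℝ) / pstep ε k s)
          - (j : ℝ) ^ 2 / (s : ℝ) - 1) <
      Phi2 ε k s := by
  obtain ⟨a, rfl⟩ : ∃ a, s = a + j := ⟨s - j, by omega⟩
  rw [Nat.add_sub_cancel, Phi2_add a j]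
  refine mul_lt_mul_of_pos_left ?_ (Phi2_pos hε0 hk a)
  exact (exp_lt_exp.2 (by linarith)).trans_le (exp_le_prod_Ioc hε0 hk (by omega) j)

/-- `Φ₂(s) > Φ₂(s − j) · exp(j·ln(k·s/p_s) − j²/s − 1)` for `0 < j < s`. -/
theorem statement5 (ε : ℝ) (hε0 : 0 < ε) (hε : ε < 1 / 8) (k : ℕ) (hk : 2 ≤ k)
    (s : ℕ) (hs : 2 ≤ s) (j : ℕ) (hj : 0 < j) (hjs : j < s) :
    Phi2 ε k (s - j) *
        Real.exp ((j : ℝ) * Real.log ((k : ℝ) * (s : ℝ) / pstep ε k s)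
          - (j : ℝ) ^ 2 / (s : ℝ) - 1) <
      Phi2 ε k s :=
  statement5_general ε hε0 k hk s j hjs
end

section
/- For every integer s ≥ 3, the product ln 2 · ln 3 ⋯ ln s (the product of ln i over integers i from 2 to s) is at least (ln s / e²)^s, where e is the base of the natural logarithm. -/
/-!
By concavity, `log` lies above its chord from `(1, 0)` to `(s, log s)`, so
`log i ≥ (i - 1) / (s - 1) · log s` for `1 ≤ i ≤ s`. Multiplying over `2 ≤ i ≤ s` gives
`∏ log i ≥ (s - 1)! / (s - 1)^(s - 1) · (log s)^(s - 1)`, and `n^n ≤ n! eⁿ` turns this into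
`∏ log i ≥ (log s)^(s - 1) / e^(s - 1)`, which beats `(log s / e²)^s` because `log s < e^(s + 1)`.
-/

open Real Finset
open scoped Nat

namespace Real

theorem sub_one_mul_log_le_sub_one_mul_log {x y : ℝ} (hx : 1 ≤ x) (hxy : x ≤ y) :
    (x - 1) * log y ≤ (y - 1) * log x := by
  rcases hx.eq_or_lt with rfl | hx
  · simp
  have hslope := strictConcaveOn_log_Ioi.concaveOn.antitoneOn_slope_gt (x := 1)
    (by norm_num : (1 : ℝ) ∈ Set.Ioi 0)
    ⟨(by linarith : (0 : ℝ) < x), hx⟩ ⟨(by linarith : (0 : ℝ) < y), hx.trans_le hxy⟩ hxy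
  simp only [slope_def_field, log_one, sub_zero] at hslope
  rwa [div_le_div_iff₀ (by linarith) (by linarith), mul_comm, mul_comm (log x)] at hslope

theorem pow_le_factorial_mul_exp (n : ℕ) : (n : ℝ) ^ n ≤ n ! * exp n := by
  have h := pow_div_factorial_le_exp (x := n) n.cast_nonneg n
  rwa [div_le_iff₀ (by positivity), mul_comm] at h

end Real

theorem Finset.prod_Icc_two_eq_prod_range {M : Type*} [CommMonoid M] (n : ℕ) (f : ℕ → M) :
    ∏ i ∈ Icc 2 (n + 1), f i = ∏ k ∈ range n, f (k + 2) := by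
  rw [← Ico_add_one_right_eq_Icc, prod_Ico_eq_prod_range]
  simp only [add_comm 2]
  congr 1

theorem factorial_mul_log_pow_le_pow_mul_prod_log (n : ℕ) :
    n ! * log (n + 1) ^ n ≤ n ^ n * ∏ i ∈ Icc 2 (n + 1), log i := by
  have hchord : ∀ k ∈ range n, ((k : ℝ) + 1) * log (n + 1) ≤ n * log ((k + 2 : ℕ) : ℝ) := by
    intro k hk
    have hkn : (k : ℝ) + 2 ≤ n + 1 := by
      have := mem_range.1 hk
      exact_mod_cast (by omega : k + 2 ≤ n + 1)
    have := sub_one_mul_log_le_sub_one_mul_log (by linarith) hkn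
    push_cast
    convert this using 2 <;> ring
  calc (n ! : ℝ) * log (n + 1) ^ n = ∏ k ∈ range n, ((k : ℝ) + 1) * log (n + 1) := by
        rw [prod_mul_distrib, prod_const, card_range, ← prod_range_add_one_eq_factorial]
        push_cast
        rfl
    _ ≤ ∏ k ∈ range n, (n : ℝ) * log ((k + 2 : ℕ) : ℝ) :=
        prod_le_prod (fun k _ => mul_nonneg (by positivity) (log_nonneg (by simp))) hchord
    _ = n ^ n * ∏ i ∈ Icc 2 (n + 1), log i := by
        rw [prod_Icc_two_eq_prod_range, prod_mul_distrib, prod_const, card_range]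

theorem log_pow_le_exp_mul_prod_log (n : ℕ) :
    log (n + 1) ^ n ≤ exp n * ∏ i ∈ Icc 2 (n + 1), log i := by
  rcases n.eq_zero_or_pos with rfl | hn
  · simp
  refine le_of_mul_le_mul_left ?_ (pow_pos (Nat.cast_pos.2 hn) n : (0 : ℝ) < n ^ n)
  calc (n : ℝ) ^ n * log (n + 1) ^ n ≤ n ! * exp n * log (n + 1) ^ n :=
        mul_le_mul_of_nonneg_right (pow_le_factorial_mul_exp n)
          (pow_nonneg (log_nonneg (by simp)) n)
    _ = exp n * (n ! * log (n + 1) ^ n) := by ring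
    _ ≤ exp n * (n ^ n * ∏ i ∈ Icc 2 (n + 1), log i) :=
        mul_le_mul_of_nonneg_left (factorial_mul_log_pow_le_pow_mul_prod_log n) (exp_pos _).le
    _ = n ^ n * (exp n * ∏ i ∈ Icc 2 (n + 1), log i) := by ring

theorem statement6_general (s : ℕ) :
    (Real.log (s : ℝ) / Real.exp 2) ^ s ≤ ∏ i ∈ Finset.Icc 2 s, Real.log (i : ℝ) := by
  rcases s with _ | n
  · simp
  push_cast
  have hL0 : 0 ≤ log (n + 1) := log_nonneg (by simp)
  have hL : log (n + 1) ≤ exp (n + 2) := calc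
    log (n + 1) ≤ n := by linarith [log_le_sub_one_of_pos (by positivity : (0 : ℝ) < n + 1)]
    _ ≤ exp (n + 2) := by linarith [add_one_le_exp ((n : ℝ) + 2)]
  calc (log (n + 1) / exp 2) ^ (n + 1)
        = log (n + 1) ^ n * (log (n + 1) / exp (n + 2)) / exp n := by
        rw [div_pow, ← exp_nat_mul, pow_succ]
        field_simp
        rw [mul_assoc _ (exp _), ← exp_add]
        push_cast
        ring_nf
    _ ≤ log (n + 1) ^ n * 1 / exp n := by
        gcongr
        exact (div_le_one (exp_pos _)).2 hL
    _ ≤ ∏ i ∈ Icc 2 (n + 1), log i := by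
        rw [mul_one, div_le_iff₀ (exp_pos _), mul_comm]
        exact log_pow_le_exp_mul_prod_log n

/-- For every integer `s ≥ 3`, `ln 2 · ln 3 ⋯ ln s ≥ (ln s / e²)^s`. -/
theorem statement6 (s : ℕ) (hs : 3 ≤ s) :
    (Real.log (s : ℝ) / Real.exp 2) ^ s ≤ ∏ i ∈ Finset.Icc 2 s, Real.log (i : ℝ) :=
  statement6_general s
end

section
/- Let δ = √10 − 3, let k and s be positive integers, and let x = k/(1 + δ) and Φ₁(s) = (√10 − 2)²·(k/(√10 − 2))^s·s!. Let B₁, …, B_r be pairwise disjoint finite sets with r a positive integer satisfying r < (1 + δ)·x, let B = B₁ ∪ ⋯ ∪ B_r, and let F be a finite family of finite sets with |F| ≥ Φ₁(s) such that the number of U ∈ F with |U ∩ B| = 1 is strictly greater than (1 − δ)·|F|. Then there exists an index i such that the number of U ∈ F with |U ∩ B_i| = 1 and U ∩ (B − B_i) = ∅ is at least ((1 − δ)/(1 + δ))·Φ₁(s)/x. -/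
/-!
Pigeonhole: a set meeting `B = ⋃ Bᵢ` in exactly one point `a` meets the `Bᵢ` containing `a` in
exactly `{a}` and misses the rest of `B`, so the `r` families in the conclusion cover `F₁(B)`.
Hence one of them has at least `|F₁(B)|/r > (1 − δ)|F|/((1 + δ)x)` members, and this is at least
`((1 − δ)/(1 + δ))·Φ₁/x` because `|F| ≥ Φ₁`.
-/

namespace Finset

variable {α ι : Type*} [DecidableEq α]

theorem inter_eq_singleton_of_subset {U S T : Finset α} {a : α} (h : U ∩ S = {a})
    (haT : a ∈ T) (hTS : T ⊆ S) : U ∩ T = {a} := by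
  refine Subset.antisymm (h ▸ inter_subset_inter_left hTS) ?_
  have haU : a ∈ U := mem_of_mem_inter_left (h ▸ mem_singleton_self a)
  simpa using mem_inter.mpr ⟨haU, haT⟩

theorem inter_sdiff_eq_empty_of_inter_eq_singleton {U S T : Finset α} {a : α}
    (h : U ∩ S = {a}) (haT : a ∈ T) : U ∩ (S \ T) = ∅ := by
  ext b
  simp only [mem_inter, mem_sdiff, notMem_empty, iff_false, not_and, not_not]
  intro hbU hbS
  have : b ∈ U ∩ S := mem_inter.mpr ⟨hbU, hbS⟩
  rw [h, mem_singleton] at this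
  exact this ▸ haT

variable [Fintype ι]

theorem card_filter_card_inter_biUnion_eq_one_le_sum (F : Finset (Finset α))
    (B : ι → Finset α) :
    (F.filter fun U => (U ∩ univ.biUnion B).card = 1).card ≤
      ∑ i, (F.filter fun U =>
        (U ∩ B i).card = 1 ∧ U ∩ (univ.biUnion B \ B i) = ∅).card := by
  refine le_trans (card_le_card ?_) card_biUnion_le
  intro U hU
  obtain ⟨hUF, hone⟩ := mem_filter.mp hU
  obtain ⟨a, ha⟩ := card_eq_one.mp hone
  obtain ⟨i, -, hai⟩ := mem_biUnion.mp (mem_of_mem_inter_right (ha ▸ mem_singleton_self a))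
  have hBi : B i ⊆ univ.biUnion B := subset_biUnion_of_mem B (mem_univ i)
  refine mem_biUnion.mpr ⟨i, mem_univ i, mem_filter.mpr ⟨hUF, ?_, ?_⟩⟩
  · rw [inter_eq_singleton_of_subset ha hai hBi, card_singleton]
  · exact inter_sdiff_eq_empty_of_inter_eq_singleton ha hai

theorem exists_lt_card_filter_of_card_mul_lt (F : Finset (Finset α)) (B : ι → Finset α)
    {a : ℝ} (h : Fintype.card ι * a < (F.filter fun U => (U ∩ univ.biUnion B).card = 1).card) :
    ∃ i, a < (F.filter fun U =>
      (U ∩ B i).card = 1 ∧ U ∩ (univ.biUnion B \ B i) = ∅).card := by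
  have hsum : ∑ _i : ι, a < ∑ i, ((F.filter fun U =>
      (U ∩ B i).card = 1 ∧ U ∩ (univ.biUnion B \ B i) = ∅).card : ℝ) := by
    rw [sum_const, card_univ, nsmul_eq_mul]
    exact h.trans_le (mod_cast card_filter_card_inter_biUnion_eq_one_le_sum F B)
  obtain ⟨i, -, hi⟩ := exists_lt_of_sum_lt hsum
  exact ⟨i, hi⟩

end Finset

theorem statement9_general (α : Type*) [DecidableEq α] (δ x Φ₁ : ℝ)
    (hδ : δ = Real.sqrt 10 - 3)
    (r : ℕ) (hrx : (r : ℝ) < (1 + δ) * x)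
    (B : Fin r → Finset α)
    (F : Finset (Finset α)) (hF : Φ₁ ≤ (F.card : ℝ))
    (h1 : (1 - δ) * (F.card : ℝ) <
      ((F.filter fun U => (U ∩ Finset.univ.biUnion B).card = 1).card : ℝ)) :
    ∃ i : Fin r,
      (1 - δ) / (1 + δ) * (Φ₁ / x) ≤
        ((F.filter fun U =>
            (U ∩ B i).card = 1 ∧ U ∩ (Finset.univ.biUnion B \ B i) = ∅).card : ℝ) := by
  have hsqrt_gt : 2 < Real.sqrt 10 := (Real.lt_sqrt (by norm_num)).mpr (by norm_num)
  have hsqrt_lt : Real.sqrt 10 < 4 := (Real.sqrt_lt' (by norm_num)).mpr (by norm_num)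
  have hδpos : 0 < 1 + δ := by linarith
  have hδlt : 0 < 1 - δ := by linarith
  have hx : 0 < x := pos_of_mul_pos_right (r.cast_nonneg.trans_lt hrx) hδpos.le
  set a := (1 - δ) / (1 + δ) * (F.card / x) with ha
  have hra : r * a < (F.filter fun U => (U ∩ Finset.univ.biUnion B).card = 1).card :=
    calc (r : ℝ) * a ≤ (1 + δ) * x * a := by gcongr
      _ = (1 - δ) * F.card := by rw [ha]; field_simp
      _ < _ := h1
  obtain ⟨i, hi⟩ := Finset.exists_lt_card_filter_of_card_mul_lt F B (by simpa using hra)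
  have hΦa : (1 - δ) / (1 + δ) * (Φ₁ / x) ≤ a := by rw [ha]; gcongr
  exact ⟨i, hΦa.trans hi.le⟩

/-- Among pairwise disjoint sets `B₁, …, B_r` with `r < (1 + δ)·x`, if more than
`(1 − δ)·|F|` members of `F` meet `B = B₁ ∪ ⋯ ∪ B_r` in exactly one element and
`|F| ≥ Φ₁(s)`, then some `Bᵢ` satisfies
`|F₁(Bᵢ) − F(B − Bᵢ)| ≥ ((1 − δ)/(1 + δ))·Φ₁(s)/x`. -/
theorem statement9 (α : Type*) [DecidableEq α] (δ x Φ₁ : ℝ)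
    (hδ : δ = Real.sqrt 10 - 3) (k s : ℕ) (hk : 0 < k) (hs : 0 < s)
    (hx : x = (k : ℝ) / (1 + δ))
    (hΦ : Φ₁ = (Real.sqrt 10 - 2) ^ 2 * ((k : ℝ) / (Real.sqrt 10 - 2)) ^ s *
      (Nat.factorial s : ℝ))
    (r : ℕ) (hr : 0 < r) (hrx : (r : ℝ) < (1 + δ) * x)
    (B : Fin r → Finset α) (hdisj : ∀ i j : Fin r, i ≠ j → Disjoint (B i) (B j))
    (F : Finset (Finset α)) (hF : Φ₁ ≤ (F.card : ℝ))
    (h1 : (1 - δ) * (F.card : ℝ) <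
      ((F.filter fun U => (U ∩ Finset.univ.biUnion B).card = 1).card : ℝ)) :
    ∃ i : Fin r,
      (1 - δ) / (1 + δ) * (Φ₁ / x) ≤
        ((F.filter fun U =>
            (U ∩ B i).card = 1 ∧ U ∩ (Finset.univ.biUnion B \ B i) = ∅).card : ℝ) :=
  statement9_general α δ x Φ₁ hδ r hrx B F hF h1
end

section
/- Let δ = √10 − 3, let k be a positive integer and s an integer with s ≥ 3, and let x = k/(1 + δ) and Φ₁(s) = (√10 − 2)²·(k/(√10 − 2))^s·s!. Let F be a finite family of finite sets, each of cardinality at most s, such that for every nonempty finite set S with |S| < s, the number of U ∈ F with S ⊆ U is strictly less than Φ₁(s − |S|). Let B₁ and B₁′ be finite sets, each of cardinality at most s, with |B₁ ∩ B₁′| = 1. Then |F(B₁) ∩ F(B₁′)| < (Φ₁(s)/x)·(1/s + 1/x). -/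
open Finset

/-!
Let `B₁ ∩ B₁' = {a}`. A member of `F` meeting both sets either contains `a`, and there are fewer
than `Φ₁(s - 1)` of those, or it contains a pair `{b, c}` with `b ∈ B₁ \ {a}`, `c ∈ B₁' \ {a}`;
such `b ≠ c`, so each of the at most `(s - 1)²` pairs lies in fewer than `Φ₁(s - 2)` members.
Since `Φ₁(n) = C cⁿ n!` with `c = x`, the bound `Φ₁(s - 1) + s (s - 1) Φ₁(s - 2)` is exactly
`(Φ₁(s)/x)(1/s + 1/x)`.
-/

theorem card_filter_meets_both_le {α : Type*} [DecidableEq α] (F : Finset (Finset α))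
    (B B' : Finset α) (a : α) :
    #(F.filter fun U => (U ∩ B).Nonempty ∧ (U ∩ B').Nonempty) ≤
      #(F.filter fun U => {a} ⊆ U) +
        ∑ p ∈ (B.erase a) ×ˢ (B'.erase a), #(F.filter fun U => {p.1, p.2} ⊆ U) := by
  set G := F.filter fun U => (U ∩ B).Nonempty ∧ (U ∩ B').Nonempty
  have h_mem : #(G.filter fun U => a ∈ U) ≤ #(F.filter fun U => {a} ⊆ U) :=
    card_le_card fun U hU => by
      simp only [G, mem_filter, singleton_subset_iff] at hU ⊢
      exact ⟨hU.1.1, hU.2⟩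
  have h_not_mem : G.filter (fun U => a ∉ U) ⊆
      ((B.erase a) ×ˢ (B'.erase a)).biUnion fun p => F.filter fun U => {p.1, p.2} ⊆ U := by
    intro U hU
    simp only [G, mem_filter] at hU
    obtain ⟨⟨hUF, ⟨b, hb⟩, ⟨c, hc⟩⟩, haU⟩ := hU
    rw [mem_inter] at hb hc
    refine mem_biUnion.mpr ⟨(b, c), mem_product.mpr ⟨?_, ?_⟩, mem_filter.mpr ⟨hUF, ?_⟩⟩
    · exact mem_erase.mpr ⟨fun h => haU (h ▸ hb.1), hb.2⟩
    · exact mem_erase.mpr ⟨fun h => haU (h ▸ hc.1), hc.2⟩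
    · exact insert_subset hb.1 (singleton_subset_iff.mpr hc.1)
  calc #G = #(G.filter fun U => a ∈ U) + #(G.filter fun U => a ∉ U) :=
        (card_filter_add_card_filter_not _).symm
    _ ≤ _ := add_le_add h_mem ((card_le_card h_not_mem).trans card_biUnion_le)

theorem card_filter_meets_both_lt {α : Type*} [DecidableEq α] (F : Finset (Finset α))
    {B B' : Finset α} (hBB' : #(B ∩ B') = 1) {N : ℕ} (hB : #B ≤ N + 1) (hB' : #B' ≤ N + 1)
    {A P : ℝ} (hP : 0 ≤ P) (h_single : ∀ a, (#(F.filter fun U => {a} ⊆ U) : ℝ) < A)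
    (h_pair : ∀ b c, b ≠ c → (#(F.filter fun U => {b, c} ⊆ U) : ℝ) ≤ P) :
    (#(F.filter fun U => (U ∩ B).Nonempty ∧ (U ∩ B').Nonempty) : ℝ) < A + N ^ 2 * P := by
  obtain ⟨a, ha⟩ := card_eq_one.mp hBB'
  obtain ⟨haB, haB'⟩ := mem_inter.mp (ha ▸ mem_singleton_self a)
  have h_pairs : ∀ p ∈ (B.erase a) ×ˢ (B'.erase a),
      (#(F.filter fun U => {p.1, p.2} ⊆ U) : ℝ) ≤ P := by
    rintro ⟨b, c⟩ hp
    obtain ⟨hb, hc⟩ := mem_product.mp hp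
    refine h_pair b c fun hbc => (mem_erase.mp hb).1 ?_
    have : b ∈ B ∩ B' := mem_inter.mpr ⟨(mem_erase.mp hb).2, hbc ▸ (mem_erase.mp hc).2⟩
    simpa [ha] using this
  have h_card : (#((B.erase a) ×ˢ (B'.erase a)) : ℝ) ≤ N ^ 2 := by
    rw [card_product, card_erase_of_mem haB, card_erase_of_mem haB', sq]
    exact_mod_cast Nat.mul_le_mul (by omega) (by omega)
  calc (#(F.filter fun U => (U ∩ B).Nonempty ∧ (U ∩ B').Nonempty) : ℝ)
      ≤ #(F.filter fun U => {a} ⊆ U) +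
          ∑ p ∈ (B.erase a) ×ˢ (B'.erase a), (#(F.filter fun U => {p.1, p.2} ⊆ U) : ℝ) := by
        exact_mod_cast card_filter_meets_both_le F B B' a
    _ < A + #((B.erase a) ×ˢ (B'.erase a)) * P := by
        refine add_lt_add_of_lt_of_le (h_single a) ?_
        simpa using sum_le_sum h_pairs
    _ ≤ A + N ^ 2 * P := by gcongr

theorem div_mul_one_div_add_one_div_of_eq_mul_pow_mul_factorial {Φ : ℕ → ℝ} {C c : ℝ}
    (hc : c ≠ 0) (hΦ : ∀ n, Φ n = C * c ^ n * n.factorial) (n : ℕ) :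
    Φ (n + 2) / c * (1 / ((n + 2 : ℕ) : ℝ) + 1 / c) = Φ (n + 1) + (n + 2) * (n + 1) * Φ n := by
  rw [hΦ, hΦ, hΦ, Nat.factorial_succ (n + 1), Nat.factorial_succ n]
  push_cast
  field_simp
  ring

theorem statement10_general (α : Type*) [DecidableEq α] (δ x : ℝ) (Φ₁ : ℕ → ℝ)
    (hδ : δ = Real.sqrt 10 - 3) (k : ℕ) (hk : 0 < k) (s : ℕ) (hs : 3 ≤ s)
    (hx : x = (k : ℝ) / (1 + δ))
    (hΦ : ∀ n : ℕ, Φ₁ n = (Real.sqrt 10 - 2) ^ 2 * ((k : ℝ) / (Real.sqrt 10 - 2)) ^ n *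
      (Nat.factorial n : ℝ))
    (F : Finset (Finset α))
    (hsup : ∀ S : Finset α, S.Nonempty → S.card < s →
      ((F.filter fun U => S ⊆ U).card : ℝ) < Φ₁ (s - S.card))
    (B₁ B₁' : Finset α) (hB₁ : B₁.card ≤ s) (hB₁' : B₁'.card ≤ s)
    (hint : (B₁ ∩ B₁').card = 1) :
    ((F.filter fun U => (U ∩ B₁).Nonempty ∧ (U ∩ B₁').Nonempty).card : ℝ) <
      Φ₁ s / x * (1 / (s : ℝ) + 1 / x) := by
  obtain ⟨m, rfl⟩ : ∃ m, s = m + 2 := ⟨s - 2, by omega⟩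
  have hr : 0 < Real.sqrt 10 - 2 := sub_pos.mpr (Real.lt_sqrt (by norm_num) |>.mpr (by norm_num))
  have hxr : x = k / (Real.sqrt 10 - 2) := by rw [hx, hδ]; ring_nf
  have hx0 : x ≠ 0 := by rw [hxr]; positivity
  have hΦm : 0 ≤ Φ₁ m := by rw [hΦ]; positivity
  rw [div_mul_one_div_add_one_div_of_eq_mul_pow_mul_factorial hx0 (hxr ▸ hΦ)]
  calc _ < Φ₁ (m + 1) + ((m + 1 : ℕ) : ℝ) ^ 2 * Φ₁ m := by
        refine card_filter_meets_both_lt F hint hB₁ hB₁' hΦm (fun a => ?_) fun b c hbc => ?_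
        · simpa using hsup {a} (singleton_nonempty a) (by simp)
        · have := hsup {b, c} (insert_nonempty b {c}) (by rw [card_pair hbc]; omega)
          simpa [card_pair hbc] using this.le
    _ ≤ Φ₁ (m + 1) + (m + 2) * (m + 1) * Φ₁ m := by
        gcongr
        push_cast
        nlinarith

/-- If for every nonempty set `S` with `|S| < s` fewer than `Φ₁(s − |S|)` members
of `F` contain `S`, and `B₁`, `B₁′` are sets of cardinality at most `s` with
`|B₁ ∩ B₁′| = 1`, then `|F(B₁) ∩ F(B₁′)| < (Φ₁(s)/x)·(1/s + 1/x)`. -/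
theorem statement10 (α : Type*) [DecidableEq α] (δ x : ℝ) (Φ₁ : ℕ → ℝ)
    (hδ : δ = Real.sqrt 10 - 3) (k : ℕ) (hk : 0 < k) (s : ℕ) (hs : 3 ≤ s)
    (hx : x = (k : ℝ) / (1 + δ))
    (hΦ : ∀ n : ℕ, Φ₁ n = (Real.sqrt 10 - 2) ^ 2 * ((k : ℝ) / (Real.sqrt 10 - 2)) ^ n *
      (Nat.factorial n : ℝ))
    (F : Finset (Finset α)) (hcard : ∀ U ∈ F, U.card ≤ s)
    (hsup : ∀ S : Finset α, S.Nonempty → S.card < s →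
      ((F.filter fun U => S ⊆ U).card : ℝ) < Φ₁ (s - S.card))
    (B₁ B₁' : Finset α) (hB₁ : B₁.card ≤ s) (hB₁' : B₁'.card ≤ s)
    (hint : (B₁ ∩ B₁').card = 1) :
    ((F.filter fun U => (U ∩ B₁).Nonempty ∧ (U ∩ B₁').Nonempty).card : ℝ) <
      Φ₁ s / x * (1 / (s : ℝ) + 1 / x) :=
  statement10_general α δ x Φ₁ hδ k hk s hs hx hΦ F hsup B₁ B₁' hB₁ hB₁' hint
end

section
/- Let B₁, …, B_r be pairwise disjoint nonempty finite sets (r a positive integer), let B = B₁ ∪ ⋯ ∪ B_r, let F be a finite family of finite sets, let j be a positive integer with j ≤ r and 2j ≤ r − j + 1, and let M > 0 be a real number with |F_j(B)| ≥ M. For each nonempty subfamily B′ of {B₁, …, B_r} define G(B′) = {U ∈ F_j(B) : U ∩ S ≠ ∅ for every S ∈ B′ and U ∩ S′ = ∅ for every S′ ∈ {B₁, …, B_r} − B′}. Then there exists a nonempty subfamily B′ of {B₁, …, B_r} with |B′| ≤ j and |G(B′)| ≥ M/(2·C(r, j)), where C(r, j) is the binomial coefficient r choose j. -/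
/-!
Send each `U ∈ F_j(B)` to the set of blocks it meets. Since the blocks are disjoint and `U`
meets `B` in `j` points, this set is nonempty of size at most `j`, and the fibre over `B′` is
exactly `G(B′)`. There are at most `∑_{1 ≤ k ≤ j} C(r, k)` such sets, and the hypothesis
`3j ≤ r + 1` makes `C(r, k)` at least double from `k` to `k + 1` for `k < j`, so this sum is at
most `2·C(r, j)`. Pigeonhole gives a fibre of size at least `M / (2·C(r, j))`.
-/

open Finset Function

namespace Nat

theorem two_mul_choose_le_choose_succ {n k : ℕ} (h : 2 * (k + 1) ≤ n - k) :
    2 * n.choose k ≤ n.choose (k + 1) := by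
  refine Nat.le_of_mul_le_mul_right ?_ k.succ_pos
  calc 2 * n.choose k * (k + 1) = n.choose k * (2 * (k + 1)) := by ring
    _ ≤ n.choose k * (n - k) := Nat.mul_le_mul_left _ h
    _ = n.choose (k + 1) * (k + 1) := (choose_succ_right_eq n k).symm

theorem sum_Icc_choose_le_two_mul_choose {n j : ℕ} (hj : 1 ≤ j) (h : 3 * j ≤ n + 1) :
    ∑ k ∈ Icc 1 j, n.choose k ≤ 2 * n.choose j := by
  induction j, hj using Nat.le_induction with
  | base => simp only [Icc_self, sum_singleton]; omega
  | succ j hj ih =>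
    rw [sum_Icc_succ_top (by omega)]
    have := two_mul_choose_le_choose_succ (n := n) (k := j) (by omega)
    have := ih (by omega)
    omega

end Nat

theorem Finset.card_filter_nonempty_card_le_le_sum_choose (ι : Type*) [Fintype ι] [DecidableEq ι]
    (j : ℕ) :
    #{T : Finset ι | T.Nonempty ∧ #T ≤ j} ≤ ∑ k ∈ Icc 1 j, (Fintype.card ι).choose k := by
  calc #{T : Finset ι | T.Nonempty ∧ #T ≤ j}
      ≤ #((Icc 1 j).biUnion fun k => powersetCard k (univ : Finset ι)) := by
        refine card_le_card fun T hT => ?_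
        obtain ⟨hTne, hTj⟩ := (mem_filter.mp hT).2
        exact mem_biUnion.mpr ⟨#T, mem_Icc.mpr ⟨card_pos.mpr hTne, hTj⟩,
          mem_powersetCard.mpr ⟨subset_univ T, rfl⟩⟩
    _ ≤ ∑ k ∈ Icc 1 j, #(powersetCard k (univ : Finset ι)) := card_biUnion_le
    _ = ∑ k ∈ Icc 1 j, (Fintype.card ι).choose k := by simp only [card_powersetCard, card_univ]

section BlockSupport

variable {α ι : Type*} [DecidableEq α] [Fintype ι] (B : ι → Finset α) (U : Finset α)

def blockSupport : Finset ι := {i | (U ∩ B i).Nonempty}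

theorem blockSupport_eq_iff (T : Finset ι) :
    blockSupport B U = T ↔ (∀ i ∈ T, (U ∩ B i).Nonempty) ∧ ∀ i ∉ T, U ∩ B i = ∅ := by
  simp only [blockSupport, Finset.ext_iff, mem_filter, mem_univ, true_and]
  grind

theorem blockSupport_nonempty {U : Finset α} (hU : (U ∩ univ.biUnion B).Nonempty) :
    (blockSupport B U).Nonempty := by
  obtain ⟨x, hx⟩ := hU
  obtain ⟨hxU, hxB⟩ := mem_inter.mp hx
  obtain ⟨i, -, hxi⟩ := mem_biUnion.mp hxB
  exact ⟨i, mem_filter.mpr ⟨mem_univ i, x, mem_inter.mpr ⟨hxU, hxi⟩⟩⟩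

theorem card_blockSupport_le {B : ι → Finset α} (hB : Pairwise (Disjoint on B)) :
    #(blockSupport B U) ≤ #(U ∩ univ.biUnion B) := by
  have hdisj : ((univ : Finset ι) : Set ι).PairwiseDisjoint fun i => U ∩ B i :=
    fun i _ i' _ h => (hB h).mono inter_subset_right inter_subset_right
  calc #(blockSupport B U) = ∑ i ∈ blockSupport B U, 1 := card_eq_sum_ones _
    _ ≤ ∑ i ∈ blockSupport B U, #(U ∩ B i) :=
        sum_le_sum fun i hi => card_pos.mpr (mem_filter.mp hi).2
    _ ≤ ∑ i, #(U ∩ B i) := sum_le_sum_of_subset (subset_univ _)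
    _ = #(U ∩ univ.biUnion B) := by rw [inter_biUnion, card_biUnion hdisj]

end BlockSupport

theorem statement12_general (α : Type*) [DecidableEq α] (r j : ℕ) (hj : 0 < j)
    (B : Fin r → Finset α)
    (hdisj : ∀ i i' : Fin r, i ≠ i' → Disjoint (B i) (B i'))
    (F : Finset (Finset α)) (hjr : j ≤ r) (h2j : 2 * j ≤ r - j + 1)
    (M : ℝ) (hM : 0 < M)
    (hFj : M ≤ ((F.filter fun U => (U ∩ Finset.univ.biUnion B).card = j).card : ℝ)) :
    ∃ T : Finset (Fin r), T.Nonempty ∧ T.card ≤ j ∧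
      M / (2 * (r.choose j : ℝ)) ≤
        ((F.filter fun U => (U ∩ Finset.univ.biUnion B).card = j ∧
            (∀ i ∈ T, (U ∩ B i).Nonempty) ∧ ∀ i ∉ T, U ∩ B i = ∅).card : ℝ) := by
  set S : Finset (Finset (Fin r)) := {T | T.Nonempty ∧ #T ≤ j}
  have hmaps : ∀ U ∈ F.filter fun U => #(U ∩ univ.biUnion B) = j, blockSupport B U ∈ S := by
    intro U hU
    have hUj := (mem_filter.mp hU).2
    exact mem_filter.mpr ⟨mem_univ _, blockSupport_nonempty B (card_pos.mp (by omega)),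
      hUj ▸ card_blockSupport_le U fun i i' => hdisj i i'⟩
  have hS : S.Nonempty :=
    ⟨{⟨0, by omega⟩},
      mem_filter.mpr ⟨mem_univ _, singleton_nonempty _, by rw [card_singleton]; omega⟩⟩
  have hScard : (#S : ℝ) ≤ 2 * r.choose j := by
    have := card_filter_nonempty_card_le_le_sum_choose (Fin r) j
    rw [Fintype.card_fin] at this
    exact_mod_cast this.trans (Nat.sum_Icc_choose_le_two_mul_choose hj (by omega))
  have hchoose : (0 : ℝ) < r.choose j := by exact_mod_cast Nat.choose_pos hjr
  have hbound : #S • (M / (2 * r.choose j)) ≤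
      (#(F.filter fun U => #(U ∩ univ.biUnion B) = j) : ℝ) := by
    calc #S • (M / (2 * r.choose j)) ≤ (2 * r.choose j) * (M / (2 * r.choose j)) := by
          rw [nsmul_eq_mul]; gcongr
      _ = M := by field_simp
      _ ≤ _ := hFj
  obtain ⟨T, hT, hfibre⟩ := exists_le_card_fiber_of_nsmul_le_card_of_maps_to hmaps hS hbound
  obtain ⟨hTne, hTj⟩ := (mem_filter.mp hT).2
  refine ⟨T, hTne, hTj, ?_⟩
  simpa only [filter_filter, blockSupport_eq_iff] using hfibre

/-- If `B₁, …, B_r` are pairwise disjoint nonempty sets with union `B`,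
`j ≤ r`, `2j ≤ r − j + 1`, and `|F_j(B)| ≥ M > 0`, then there is a nonempty
subfamily `B′` of `{B₁, …, B_r}` with `|B′| ≤ j` and `|G(B′)| ≥ M/(2·C(r, j))`,
where `G(B′)` consists of the `U ∈ F_j(B)` meeting every member of `B′` and no
member of `{B₁, …, B_r} − B′`. -/
theorem statement12 (α : Type*) [DecidableEq α] (r j : ℕ) (hr : 0 < r) (hj : 0 < j)
    (B : Fin r → Finset α) (hne : ∀ i, (B i).Nonempty)
    (hdisj : ∀ i i' : Fin r, i ≠ i' → Disjoint (B i) (B i'))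
    (F : Finset (Finset α)) (hjr : j ≤ r) (h2j : 2 * j ≤ r - j + 1)
    (M : ℝ) (hM : 0 < M)
    (hFj : M ≤ ((F.filter fun U => (U ∩ Finset.univ.biUnion B).card = j).card : ℝ)) :
    ∃ T : Finset (Fin r), T.Nonempty ∧ T.card ≤ j ∧
      M / (2 * (r.choose j : ℝ)) ≤
        ((F.filter fun U => (U ∩ Finset.univ.biUnion B).card = j ∧
            (∀ i ∈ T, (U ∩ B i).Nonempty) ∧ ∀ i ∉ T, U ∩ B i = ∅).card : ℝ) :=
  statement12_general α r j hj B hdisj F hjr h2j M hM hFj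
end

section
/- Let ε ∈ (0, 1/8), let k and s be integers with k ≥ 2 and s ≥ 2, let p = (1/8)·ln(min(k, s)), and assume 2p + ln(2p) < 3p. Let j and r′ be positive integers with r′ ≤ j ≤ 2p and j < s. Let F be a family of finite sets, each of cardinality at most s, such that for every nonempty finite set S with |S| < s, the number of U ∈ F with S ⊆ U is at most Φ₂(s − |S|). Let B′ be a finite set with |B′| ≤ r′·s, and let H be a finite subfamily of {U ∈ F : |U ∩ B′| = j} with |H| > s^j · Φ₂(s − j) · e^{−4p}. Then for every v ∈ B′, the number of U ∈ H containing v is at most (e^{7p}/s)·|H|. -/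
/-!
A set `U ∈ H` through `v` meets `B′` in `v` together with a `(j-1)`-subset `T` of `B′ \ {v}`, and
`U ⊇ {v} ∪ T`; so by the codegree hypothesis at most `C(|B′|-1, j-1) · Φ₂(s-j)` sets of `H` contain `v`.
Since `|B′| ≤ r′s ≤ 2ps`, the binomial coefficient is at most `(2ps)^{j-1}/(j-1)! ≤ e^{2p} s^{j-1}`,
and the lower bound on `|H|` turns `e^{2p} s^{j-1} Φ₂(s-j)` into at most `(e^{7p}/s)·|H|`.
-/

open Finset Nat

lemma pstep_nonneg {ε : ℝ} (hε : 0 ≤ ε) (k j : ℕ) : 0 ≤ pstep ε k j := by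
  unfold pstep
  split_ifs
  · exact hε
  · exact mul_nonneg hε (by simpa only [Nat.cast_min] using Real.log_natCast_nonneg (min j k))

lemma Phi2_nonneg {ε : ℝ} (hε : 0 ≤ ε) (k s : ℕ) : 0 ≤ Phi2 ε k s :=
  div_nonneg (by positivity) (prod_nonneg fun j _ => pstep_nonneg hε k j)

theorem Nat.cast_choose_le_exp_mul_pow {n s : ℕ} {x : ℝ} (hx : 0 ≤ x) (hn : (n : ℝ) ≤ x * s)
    (m : ℕ) : (n.choose m : ℝ) ≤ Real.exp x * (s : ℝ) ^ m :=
  calc (n.choose m : ℝ) ≤ (n : ℝ) ^ m / m ! := Nat.choose_le_pow_div m n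
    _ ≤ (x * s) ^ m / m ! := by gcongr
    _ = x ^ m / m ! * (s : ℝ) ^ m := by rw [mul_pow]; ring
    _ ≤ Real.exp x * (s : ℝ) ^ m := by gcongr; exact Real.pow_div_factorial_le_exp x hx m

theorem card_filter_mem_le_choose_mul {α : Type*} [DecidableEq α] {H : Finset (Finset α)}
    {B : Finset α} {j : ℕ} (hj : 0 < j) (hH : ∀ U ∈ H, #(U ∩ B) = j) {v : α} (hv : v ∈ B)
    {M : ℝ} (hM : ∀ S : Finset α, v ∈ S → #S = j → (#{U ∈ H | S ⊆ U} : ℝ) ≤ M) :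
    (#{U ∈ H | v ∈ U} : ℝ) ≤ (#B - 1).choose (j - 1) * M := by
  set t := (B.erase v).powersetCard (j - 1)
  have hmaps : Set.MapsTo (fun U => (U ∩ B).erase v) (({U ∈ H | v ∈ U} : Finset _) : Set _) t := by
    intro U hU
    obtain ⟨hUH, hvU⟩ := mem_filter.mp hU
    refine mem_powersetCard.mpr ⟨erase_subset_erase v inter_subset_right, ?_⟩
    rw [card_erase_of_mem (mem_inter.mpr ⟨hvU, hv⟩), hH U hUH]
  have hfiber (T : Finset α) (hT : T ∈ t) :
      (#{U ∈ {U ∈ H | v ∈ U} | (U ∩ B).erase v = T} : ℝ) ≤ M := by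
    obtain ⟨hTB, hTcard⟩ := mem_powersetCard.mp hT
    have hvT : v ∉ T := fun h => (mem_erase.mp (hTB h)).1 rfl
    refine le_trans ?_ (hM (insert v T) (mem_insert_self v T) ?_)
    · gcongr
      intro U hU
      simp only [mem_filter] at hU ⊢
      obtain ⟨⟨hUH, hvU⟩, rfl⟩ := hU
      rw [insert_erase (mem_inter.mpr ⟨hvU, hv⟩)]
      exact ⟨hUH, inter_subset_left⟩
    · rw [card_insert_of_notMem hvT, hTcard, Nat.sub_add_cancel hj]
  calc (#{U ∈ H | v ∈ U} : ℝ)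
      = ∑ T ∈ t, (#{U ∈ {U ∈ H | v ∈ U} | (U ∩ B).erase v = T} : ℝ) := by
        rw [card_eq_sum_card_fiberwise hmaps]; push_cast; rfl
    _ ≤ ∑ _T ∈ t, M := sum_le_sum hfiber
    _ = (#B - 1).choose (j - 1) * M := by
        rw [sum_const, card_powersetCard, card_erase_of_mem hv, nsmul_eq_mul]

theorem statement14_general (α : Type*) [DecidableEq α] (ε : ℝ) (hε0 : 0 < ε)
    (k s : ℕ) (p : ℝ) (j r' : ℕ) (hj : 0 < j) (hr'j : r' ≤ j)
    (hj2p : (j : ℝ) ≤ 2 * p) (hjs : j < s)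
    (F : Finset (Finset α))
    (hsup : ∀ S : Finset α, S.Nonempty → S.card < s →
      ((F.filter fun U => S ⊆ U).card : ℝ) ≤ Phi2 ε k (s - S.card))
    (B' : Finset α) (hB' : B'.card ≤ r' * s)
    (H : Finset (Finset α)) (hH : H ⊆ F.filter fun U => (U ∩ B').card = j)
    (hHcard : (s : ℝ) ^ j * Phi2 ε k (s - j) * Real.exp (-(4 * p)) < (H.card : ℝ)) :
    ∀ v ∈ B', ((H.filter fun U => v ∈ U).card : ℝ) ≤
      Real.exp (7 * p) / (s : ℝ) * (H.card : ℝ) := by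
  intro v hv
  have hp : 0 ≤ p := by
    have : (1 : ℝ) ≤ j := by exact_mod_cast hj
    linarith
  have hs : (0 : ℝ) < s := by exact_mod_cast hj.trans hjs
  have hΦ := Phi2_nonneg hε0.le k (s - j)
  have hcount : (#{U ∈ H | v ∈ U} : ℝ) ≤ (#B' - 1).choose (j - 1) * Phi2 ε k (s - j) := by
    refine card_filter_mem_le_choose_mul hj (fun U hU => (mem_filter.mp (hH hU)).2) hv ?_
    intro S hvS hS
    calc (#{U ∈ H | S ⊆ U} : ℝ) ≤ #{U ∈ F | S ⊆ U} := by
          gcongr; exact fun U hU => (mem_filter.mp (hH hU)).1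
      _ ≤ Phi2 ε k (s - j) := hS ▸ hsup S ⟨v, hvS⟩ (hS ▸ hjs)
  have hB'2ps : ((#B' - 1 : ℕ) : ℝ) ≤ 2 * p * s :=
    calc ((#B' - 1 : ℕ) : ℝ) ≤ r' * s := by exact_mod_cast (Nat.sub_le _ 1).trans hB'
      _ ≤ j * s := by gcongr
      _ ≤ 2 * p * s := by gcongr
  have hsj : (s : ℝ) ^ j = s ^ (j - 1) * s := by rw [← pow_succ, Nat.sub_add_cancel hj]
  have hexp : Real.exp (3 * p) = Real.exp (7 * p) * Real.exp (-(4 * p)) := by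
    rw [← Real.exp_add]; ring_nf
  calc (#{U ∈ H | v ∈ U} : ℝ)
      ≤ (#B' - 1).choose (j - 1) * Phi2 ε k (s - j) := hcount
    _ ≤ Real.exp (2 * p) * s ^ (j - 1) * Phi2 ε k (s - j) := by
        gcongr; exact Nat.cast_choose_le_exp_mul_pow (by positivity) hB'2ps _
    _ ≤ Real.exp (3 * p) * s ^ (j - 1) * Phi2 ε k (s - j) := by gcongr; linarith
    _ = Real.exp (7 * p) / s * (s ^ j * Phi2 ε k (s - j) * Real.exp (-(4 * p))) := by
        rw [hsj, hexp]; field_simp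
    _ ≤ Real.exp (7 * p) / s * #H := by gcongr

/-- For `v ∈ B′`, the number of `U ∈ H` containing `v` is at most `(e^{7p}/s)·|H|`. -/
theorem statement14 (α : Type*) [DecidableEq α] (ε : ℝ) (hε0 : 0 < ε) (hε : ε < 1 / 8)
    (k s : ℕ) (hk : 2 ≤ k) (hs : 2 ≤ s)
    (p : ℝ) (hp : p = 1 / 8 * Real.log (min (k : ℝ) (s : ℝ)))
    (hln : 2 * p + Real.log (2 * p) < 3 * p)
    (j r' : ℕ) (hj : 0 < j) (hr' : 0 < r') (hr'j : r' ≤ j)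
    (hj2p : (j : ℝ) ≤ 2 * p) (hjs : j < s)
    (F : Finset (Finset α)) (hcard : ∀ U ∈ F, U.card ≤ s)
    (hsup : ∀ S : Finset α, S.Nonempty → S.card < s →
      ((F.filter fun U => S ⊆ U).card : ℝ) ≤ Phi2 ε k (s - S.card))
    (B' : Finset α) (hB' : B'.card ≤ r' * s)
    (H : Finset (Finset α)) (hH : H ⊆ F.filter fun U => (U ∩ B').card = j)
    (hHcard : (s : ℝ) ^ j * Phi2 ε k (s - j) * Real.exp (-(4 * p)) < (H.card : ℝ)) :
    ∀ v ∈ B', ((H.filter fun U => v ∈ U).card : ℝ) ≤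
      Real.exp (7 * p) / (s : ℝ) * (H.card : ℝ) :=
  statement14_general α ε hε0 k s p j r' hj hr'j hj2p hjs F hsup B' hB' H hH hHcard
end

section
/- Let p ≥ 1 be a real number with 8p³·e^{−p} < 1/2, let y = e^{8p}, let s be an integer with s ≥ y, and let x be a real number with x ≥ y/p. Let j and r′ be positive integers with r′ ≤ j ≤ 2p and j < s. Let B′ be a set and let H be a finite family of sets such that every V ∈ H satisfies |V| ≤ s and |V ∩ B′| = j, and such that for every element v: if v ∈ B′ then the number of U ∈ H containing v is at most (e^{7p}/s)·|H|, and if v ∉ B′ then the number of U ∈ H containing v is at most (e^{7p}/((s − j)·x))·|H|. Then for every V ∈ H, r′ · |{U ∈ H : U ∩ V ≠ ∅}| ≤ |H|/2. -/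
/-!
Every `U ∈ H` meeting `V` contains some `v ∈ V`, so `|H(V)|` is at most the sum of the degrees
`|H(v)|` over `v ∈ V`. The `j` vertices of `V ∩ B′` contribute at most `j·e^{7p}/s·|H|`, the at
most `s − j` others at most `e^{7p}/x·|H|` together. Since `e^{7p} = e^{8p}·e^{-p}` with
`e^{8p} ≤ s` and `e^{8p} ≤ p·x`, this gives `|H(V)| ≤ 3p·e^{-p}·|H|`, and
`r′ ≤ 2p` turns it into `r′·|H(V)| ≤ 6p²e^{-p}|H| ≤ 8p³e^{-p}|H| < |H|/2`.
-/

open Finset Real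

lemma mul_div_le_of_le_of_nonneg {𝕜 : Type*} [Field 𝕜] [LinearOrder 𝕜] [IsStrictOrderedRing 𝕜]
    {a b c : 𝕜} (ha : 0 ≤ a) (hab : a ≤ b) (hc : 0 ≤ c) :
    a * (c / b) ≤ c := by
  rcases ha.eq_or_lt with rfl | ha
  · simpa using hc
  · calc a * (c / b) ≤ b * (c / b) := by gcongr; exact div_nonneg hc (ha.trans_le hab).le
      _ = c := mul_div_cancel₀ c (ha.trans_le hab).ne'

namespace Finset

variable {α : Type*} [DecidableEq α]

lemma card_filter_inter_nonempty_le_sum_card_filter_mem (H : Finset (Finset α))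
    (V : Finset α) :
    (H.filter fun U => (U ∩ V).Nonempty).card ≤
      ∑ v ∈ V, (H.filter fun U => v ∈ U).card := by
  refine le_trans (card_le_card ?_) card_biUnion_le
  intro U hU
  obtain ⟨hUH, w, hw⟩ := mem_filter.mp hU
  exact mem_biUnion.mpr ⟨w, (mem_inter.mp hw).2, mem_filter.mpr ⟨hUH, (mem_inter.mp hw).1⟩⟩

lemma sum_le_card_inter_mul_add_card_sdiff_mul {f : α → ℝ} {B V : Finset α} {a b : ℝ}
    (ha : ∀ v ∈ B, f v ≤ a) (hb : ∀ v ∉ B, f v ≤ b) :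
    ∑ v ∈ V, f v ≤ (V ∩ B).card * a + (V \ B).card * b := by
  rw [← sum_inter_add_sum_sdiff V B]
  gcongr
  · simpa using sum_le_card_nsmul _ f a fun v hv => ha v (mem_inter.mp hv).2
  · simpa using sum_le_card_nsmul _ f b fun v hv => hb v (mem_sdiff.mp hv).2

/-- The vertices outside `B` may have degree up to `c / (s - j)`, because there are at most
`s - j` of them. -/
lemma card_filter_inter_nonempty_le {H : Finset (Finset α)} {B V : Finset α} {s j : ℕ}
    {a c : ℝ} (hVs : V.card ≤ s) (hVB : (V ∩ B).card = j) (hc : 0 ≤ c)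
    (hin : ∀ v ∈ B, ((H.filter fun U => v ∈ U).card : ℝ) ≤ a)
    (hout : ∀ v ∉ B, ((H.filter fun U => v ∈ U).card : ℝ) ≤ c / ((s : ℝ) - j)) :
    ((H.filter fun U => (U ∩ V).Nonempty).card : ℝ) ≤ j * a + c := by
  have hsdiff : ((V \ B).card : ℝ) ≤ (s : ℝ) - j := by
    have := card_inter_add_card_sdiff V B
    rw [le_sub_iff_add_le]
    exact_mod_cast (by omega : (V \ B).card + j ≤ s)
  calc ((H.filter fun U => (U ∩ V).Nonempty).card : ℝ)
      ≤ ∑ v ∈ V, ((H.filter fun U => v ∈ U).card : ℝ) := by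
        exact_mod_cast card_filter_inter_nonempty_le_sum_card_filter_mem H V
    _ ≤ (V ∩ B).card * a + (V \ B).card * (c / ((s : ℝ) - j)) :=
        sum_le_card_inter_mul_add_card_sdiff_mul hin hout
    _ ≤ j * a + c := by
        rw [hVB]
        gcongr
        exact mul_div_le_of_le_of_nonneg (Nat.cast_nonneg _) hsdiff hc

end Finset

lemma exp_seven_mul_div_le {p z : ℝ} (hz : exp (8 * p) ≤ z) : exp (7 * p) / z ≤ exp (-p) := by
  have hz0 : 0 < z := (exp_pos _).trans_le hz
  rw [div_le_iff₀ hz0, show 7 * p = 8 * p + -p by ring, exp_add, mul_comm]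
  gcongr

lemma exp_seven_mul_div_le_mul {p x : ℝ} (hp : 0 < p) (hx : exp (8 * p) / p ≤ x) :
    exp (7 * p) / x ≤ p * exp (-p) := by
  rw [div_le_iff₀ hp] at hx
  have hx0 : 0 < x := pos_of_mul_pos_left ((exp_pos _).trans_le hx) hp.le
  have h := exp_seven_mul_div_le hx
  rw [div_le_iff₀ (mul_pos hx0 hp)] at h
  rw [div_le_iff₀ hx0]
  linarith

theorem statement16_general (α : Type*) [DecidableEq α]
    (p : ℝ) (hp1 : 1 ≤ p) (hp3 : 8 * p ^ 3 * Real.exp (-p) < 1 / 2)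
    (y : ℝ) (hy : y = Real.exp (8 * p))
    (s : ℕ) (hsy : y ≤ (s : ℝ))
    (x : ℝ) (hx : y / p ≤ x)
    (j r' : ℕ) (hr'j : r' ≤ j)
    (hj2p : (j : ℝ) ≤ 2 * p)
    (B' : Finset α) (H : Finset (Finset α))
    (hmem : ∀ V ∈ H, V.card ≤ s ∧ (V ∩ B').card = j)
    (hin : ∀ v ∈ B', ((H.filter fun U => v ∈ U).card : ℝ) ≤
      Real.exp (7 * p) / (s : ℝ) * (H.card : ℝ))
    (hout : ∀ v ∉ B', ((H.filter fun U => v ∈ U).card : ℝ) ≤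
      Real.exp (7 * p) / (((s : ℝ) - (j : ℝ)) * x) * (H.card : ℝ)) :
    ∀ V ∈ H, (r' : ℝ) * ((H.filter fun U => (U ∩ V).Nonempty).card : ℝ) ≤
      (H.card : ℝ) / 2 := by
  intro V hV
  subst hy
  obtain ⟨hVs, hVB⟩ := hmem V hV
  have hp : 0 < p := one_pos.trans_le hp1
  have hx0 : 0 ≤ x := (div_pos (exp_pos _) hp).le.trans hx
  have hdeg := card_filter_inter_nonempty_le (c := exp (7 * p) / x * H.card) hVs hVB
    (by positivity) hin fun v hv => (hout v hv).trans_eq (by rw [mul_comm _ x, ← div_div]; ring)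
  have hr' : (r' : ℝ) ≤ 2 * p := (Nat.cast_le.mpr hr'j).trans hj2p
  calc (r' : ℝ) * ((H.filter fun U => (U ∩ V).Nonempty).card : ℝ)
      ≤ 2 * p * (j * (exp (7 * p) / s * H.card) + exp (7 * p) / x * H.card) := by gcongr
    _ ≤ 2 * p * (2 * p * (exp (-p) * H.card) + p * exp (-p) * H.card) := by
        gcongr
        · exact exp_seven_mul_div_le hsy
        · exact exp_seven_mul_div_le_mul hp hx
    _ = 6 * p ^ 2 * exp (-p) * H.card := by ring
    _ ≤ 8 * p ^ 3 * exp (-p) * H.card := by gcongr ?_ * _ * _; nlinarith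
    _ ≤ H.card / 2 := by nlinarith [(H.card.cast_nonneg : (0 : ℝ) ≤ H.card)]

/-- If each element of `B′` lies in at most `(e^{7p}/s)·|H|` members of `H` and
each element outside `B′` lies in at most `(e^{7p}/((s − j)·x))·|H|` members,
and every `V ∈ H` has `|V| ≤ s` and `|V ∩ B′| = j`, then every `V ∈ H` meets at
most `|H|/(2r′)` members of `H`, i.e. `r′·|H(V)| ≤ |H|/2`. -/
theorem statement16 (α : Type*) [DecidableEq α]
    (p : ℝ) (hp1 : 1 ≤ p) (hp3 : 8 * p ^ 3 * Real.exp (-p) < 1 / 2)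
    (y : ℝ) (hy : y = Real.exp (8 * p))
    (s : ℕ) (hsy : y ≤ (s : ℝ))
    (x : ℝ) (hx : y / p ≤ x)
    (j r' : ℕ) (hj : 0 < j) (hr' : 0 < r') (hr'j : r' ≤ j)
    (hj2p : (j : ℝ) ≤ 2 * p) (hjs : j < s)
    (B' : Finset α) (H : Finset (Finset α))
    (hmem : ∀ V ∈ H, V.card ≤ s ∧ (V ∩ B').card = j)
    (hin : ∀ v ∈ B', ((H.filter fun U => v ∈ U).card : ℝ) ≤
      Real.exp (7 * p) / (s : ℝ) * (H.card : ℝ))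
    (hout : ∀ v ∉ B', ((H.filter fun U => v ∈ U).card : ℝ) ≤
      Real.exp (7 * p) / (((s : ℝ) - (j : ℝ)) * x) * (H.card : ℝ)) :
    ∀ V ∈ H, (r' : ℝ) * ((H.filter fun U => (U ∩ V).Nonempty).card : ℝ) ≤
      (H.card : ℝ) / 2 :=
  statement16_general α p hp1 hp3 y hy s hsy x hx j r' hr'j hj2p B' H hmem hin hout
end
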